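/- arXiv:2512.06680 — 8 statements merged into one kernel-verified Lean document; each statement's English description precedes it below -/
import Mathlib

section
/- Let (L, [-,-], s) be a Lie superalgebra over a field K of characteristic 2. A map s̄ : L₁ → L₀ is a squaring on L satisfying the Jacobi identity (i.e. s̄(λx) = λ²s̄(x), s̄(x+y) = s̄(x) + s̄(y) + [x,y] for all x,y ∈ L₁ and λ ∈ K, and [s̄(x), y] = [x,[x,y]] for all x ∈ L₁ and y ∈ L) if and only if there exists a 2-semilinear map g : L₁ → Z(L)₀ (i.e. g(λx + y) = λ²g(x) + g(y) for all λ ∈ K, x,y ∈ L₁) with values in the even part of the center of L such that s̄(x) = s(x) + g(x) for all x ∈ L₁. -/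
/-- A Lie superalgebra over a field of characteristic 2, encoded as a predicate on the
data: a `ℤ/2`-grading given by complementary submodules `ev` and `od`, a bilinear
symmetric bracket `br` (in characteristic 2 skew-symmetry is symmetry), and a squaring
`sq : L → L` whose value is only relevant on `od`. -/
structure IsLieSuper2 (K : Type*) [Field K] {L : Type*} [AddCommGroup L] [Module K L]
    (ev od : Submodule K L) (br : L → L → L) (sq : L → L) : Prop where
  compl : IsCompl ev od
  add_left : ∀ x y z : L, br (x + y) z = br x z + br y z
  smul_left : ∀ (c : K) (x y : L), br (c • x) y = c • br x y
  symm : ∀ x y : L, br x y = br y x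
  alt_ev : ∀ x ∈ ev, br x x = 0
  grade_ee : ∀ x ∈ ev, ∀ y ∈ ev, br x y ∈ ev
  grade_eo : ∀ x ∈ ev, ∀ y ∈ od, br x y ∈ od
  grade_oo : ∀ x ∈ od, ∀ y ∈ od, br x y ∈ ev
  jacobi_ev : ∀ x ∈ ev, ∀ y ∈ ev, ∀ z : L,
    br (br x y) z = br x (br y z) + br y (br x z)
  sq_mem : ∀ x ∈ od, sq x ∈ ev
  sq_smul : ∀ (c : K), ∀ x ∈ od, sq (c • x) = (c * c) • sq x
  sq_add : ∀ x ∈ od, ∀ y ∈ od, sq (x + y) = sq x + sq y + br x y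
  sq_jacobi : ∀ x ∈ od, ∀ z : L, br (sq x) z = br x (br x z)

/-! The difference of two squarings compatible with the same bracket (written `t + s`, which is
`t - s` in characteristic 2) is 2-semilinear because the bracket terms of their polarisations
cancel; it is central because both satisfy `[s x, z] = [x, [x, z]]`, so their brackets with
any `z` agree. Conversely, adding an even central 2-semilinear map to a squaring
changes neither the polarisation `s (x + y) - s x - s y` nor the brackets `[s x, -]`. -/

theorem CharTwo.add_self_eq_zero_of_module {K L : Type*} [Field K] [CharP K 2]
    [AddCommGroup L] [Module K L] (v : L) : v + v = 0 := by
  rw [← two_smul K v, CharTwo.two_eq_zero, zero_smul]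

section Squaring

variable {K L : Type*} [Field K] [AddCommGroup L] [Module K L]
  {ev od : Submodule K L} {br : L → L → L}

structure IsJacobiSquaring (ev od : Submodule K L) (br : L → L → L) (s : L → L) : Prop where
  mem_ev : ∀ x ∈ od, s x ∈ ev
  map_smul : ∀ (c : K), ∀ x ∈ od, s (c • x) = (c * c) • s x
  map_add : ∀ x ∈ od, ∀ y ∈ od, s (x + y) = s x + s y + br x y
  jacobi : ∀ x ∈ od, ∀ z : L, br (s x) z = br x (br x z)

structure IsCentralTwoSemilinear (ev od : Submodule K L) (br : L → L → L) (g : L → L) :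
    Prop where
  mem_ev : ∀ x ∈ od, g x ∈ ev
  central : ∀ x ∈ od, ∀ z : L, br (g x) z = 0
  map_smul_add : ∀ (c : K), ∀ x ∈ od, ∀ y ∈ od, g (c • x + y) = (c * c) • g x + g y

theorem IsLieSuper2.isJacobiSquaring {sq : L → L} (hL : IsLieSuper2 K ev od br sq) :
    IsJacobiSquaring ev od br sq :=
  ⟨hL.sq_mem, hL.sq_smul, hL.sq_add, hL.sq_jacobi⟩

namespace IsCentralTwoSemilinear

variable {g : L → L} (hg : IsCentralTwoSemilinear ev od br g)
include hg

theorem map_zero : g 0 = 0 := by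
  have h := hg.map_smul_add 1 0 od.zero_mem 0 od.zero_mem
  rwa [smul_zero, add_zero, one_mul, one_smul, left_eq_add] at h

theorem map_smul (c : K) {x : L} (hx : x ∈ od) : g (c • x) = (c * c) • g x := by
  simpa only [add_zero, hg.map_zero] using hg.map_smul_add c x hx 0 od.zero_mem

theorem map_add {x y : L} (hx : x ∈ od) (hy : y ∈ od) : g (x + y) = g x + g y := by
  simpa only [one_smul, one_mul] using hg.map_smul_add 1 x hx y hy

end IsCentralTwoSemilinear

namespace IsJacobiSquaring

variable {s t : L → L} (hbr : ∀ x y z : L, br (x + y) z = br x z + br y z)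
include hbr

theorem isCentralTwoSemilinear_add [CharP K 2] (hs : IsJacobiSquaring ev od br s)
    (ht : IsJacobiSquaring ev od br t) :
    IsCentralTwoSemilinear ev od br (fun x => t x + s x) where
  mem_ev x hx := ev.add_mem (ht.mem_ev x hx) (hs.mem_ev x hx)
  central x hx z := by
    rw [hbr, ht.jacobi x hx, hs.jacobi x hx, CharTwo.add_self_eq_zero_of_module (K := K)]
  map_smul_add c x hx y hy := by
    have hcx : c • x ∈ od := od.smul_mem c hx
    have hbr_cancel := CharTwo.add_self_eq_zero_of_module (K := K) (br (c • x) y)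
    simp only [ht.map_add _ hcx _ hy, hs.map_add _ hcx _ hy, ht.map_smul c x hx,
      hs.map_smul c x hx, smul_add]
    linear_combination (norm := module) hbr_cancel

theorem add_of_isCentralTwoSemilinear {g : L → L} (hs : IsJacobiSquaring ev od br s)
    (hg : IsCentralTwoSemilinear ev od br g) :
    IsJacobiSquaring ev od br (fun x => s x + g x) where
  mem_ev x hx := ev.add_mem (hs.mem_ev x hx) (hg.mem_ev x hx)
  map_smul c x hx := by rw [hs.map_smul c x hx, hg.map_smul c hx, smul_add]
  map_add x hx y hy := by
    rw [hs.map_add x hx y hy, hg.map_add hx hy]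
    abel
  jacobi x hx z := by rw [hbr, hs.jacobi x hx, hg.central x hx, add_zero]

end IsJacobiSquaring

theorem IsJacobiSquaring.congr {s t : L → L} (hs : IsJacobiSquaring ev od br s)
    (h : ∀ x ∈ od, s x = t x) : IsJacobiSquaring ev od br t where
  mem_ev x hx := h x hx ▸ hs.mem_ev x hx
  map_smul c x hx := by rw [← h _ (od.smul_mem c hx), ← h x hx, hs.map_smul c x hx]
  map_add x hx y hy := by
    rw [← h _ (od.add_mem hx hy), ← h x hx, ← h y hy, hs.map_add x hx y hy]
  jacobi x hx z := h x hx ▸ hs.jacobi x hx z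

end Squaring

/-- Let `(L, br, sq)` be a Lie superalgebra over a field `K` of
characteristic 2.  A map `s' : L₁ → L₀` is a squaring on `L` satisfying the Jacobi
identity if and only if there exists a 2-semilinear map `g : L₁ → Z(L)₀` with values in
the even part of the center of `L` such that `s' x = sq x + g x` for all odd `x`. -/
theorem squaring_iff_exists_central_semilinear
    {K L : Type*} [Field K] [CharP K 2] [AddCommGroup L] [Module K L]
    (ev od : Submodule K L) (br : L → L → L) (sq : L → L)
    (hL : IsLieSuper2 K ev od br sq) (s' : L → L) :
    ((∀ x ∈ od, s' x ∈ ev) ∧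
     (∀ (c : K), ∀ x ∈ od, s' (c • x) = (c * c) • s' x) ∧
     (∀ x ∈ od, ∀ y ∈ od, s' (x + y) = s' x + s' y + br x y) ∧
     (∀ x ∈ od, ∀ z : L, br (s' x) z = br x (br x z))) ↔
    (∃ g : L → L,
      (∀ x ∈ od, g x ∈ ev) ∧
      (∀ x ∈ od, ∀ z : L, br (g x) z = 0) ∧
      (∀ (c : K), ∀ x ∈ od, ∀ y ∈ od, g (c • x + y) = (c * c) • g x + g y) ∧
      (∀ x ∈ od, s' x = sq x + g x)) := by
  have hsq := hL.isJacobiSquaring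
  constructor
  · rintro ⟨hmem, hsmul, hadd, hjac⟩
    obtain ⟨hgev, hgcen, hglin⟩ :=
      hsq.isCentralTwoSemilinear_add hL.add_left ⟨hmem, hsmul, hadd, hjac⟩
    refine ⟨fun x => s' x + sq x, hgev, hgcen, hglin, fun x _ => ?_⟩
    rw [add_left_comm, CharTwo.add_self_eq_zero_of_module (K := K), add_zero]
  · rintro ⟨g, hgev, hgcen, hglin, hgs⟩
    obtain ⟨hmem, hsmul, hadd, hjac⟩ :=
      (hsq.add_of_isCentralTwoSemilinear hL.add_left ⟨hgev, hgcen, hglin⟩).congr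
        fun x hx => (hgs x hx).symm
    exact ⟨hmem, hsmul, hadd, hjac⟩
end

section
/- Let A = A₀ ⊕ A₁ be an associative superalgebra over a field K of characteristic 2, regarded as a Lie superalgebra with bracket [x,y] = xy + yx and squaring s(a) = a² for a ∈ A₁. Let μ : A × A → A be a Hochschild 2-cocycle, i.e. a bilinear map with xμ(y,z) + μ(xy,z) + μ(x,yz) + μ(x,y)z = 0 for all x,y,z ∈ A. Define φ_μ(x,y) = μ(x,y) + μ(y,x) for x,y ∈ A and ω_μ(x) = μ(x,x) for x ∈ A₁. Then (φ_μ, ω_μ) is a 2-cocycle of the Lie superalgebra A with values in the adjoint module A: (i) ω_μ(λx) = λ²ω_μ(x) and ω_μ(x+y) = ω_μ(x) + ω_μ(y) + φ_μ(x,y) for x,y ∈ A₁, λ ∈ K; (ii) [x, φ_μ(y,z)] + [y, φ_μ(z,x)] + [z, φ_μ(x,y)] + φ_μ([x,y], z) + φ_μ([y,z], x) + φ_μ([z,x], y) = 0 for all x,y,z ∈ A; (iii) [x, φ_μ(x,z)] + [z, ω_μ(x)] + φ_μ(s(x), z) + φ_μ([x,z], x) = 0 for all x ∈ A₁ and z ∈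 A. -/
/-!
Write `δμ(x,y,z) = xμ(y,z) + μ(xy,z) + μ(x,yz) + μ(x,y)z` for the Hochschild differential
(`Hochschild.diff`); the paper's `φ_μ` is `Hochschild.commutator μ`. Expanding the brackets
by biadditivity, the left side of (ii) is the sum of `δμ` over the six permutations of
`(x,y,z)` and the left side of (iii) is `δμ(x,x,z) + δμ(x,z,x) + δμ(z,x,x)`, so both vanish
for a Hochschild cocycle. Part (i) is bilinearity of `μ` on the diagonal.
-/

structure IsBiadditive {A : Type*} [AddCommMonoid A] (f : A → A → A) : Prop where
  add_left : ∀ a b c : A, f (a + b) c = f a c + f b c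
  add_right : ∀ a b c : A, f a (b + c) = f a b + f a c

namespace Hochschild

variable {A : Type*} [AddCommMonoid A]

def commutator (f : A → A → A) (x y : A) : A := f x y + f y x

def diff (mul μ : A → A → A) (x y z : A) : A :=
  mul x (μ y z) + μ (mul x y) z + μ x (mul y z) + mul (μ x y) z

theorem apply_add_add_eq {f : A → A → A} (hf : IsBiadditive f) (x y : A) :
    f (x + y) (x + y) = f x x + f y y + commutator f x y := by
  simp only [commutator, hf.add_left, hf.add_right]
  abel

variable {mul μ : A → A → A}

theorem sum_commutator_commutator_eq_sum_diff
    (hmul : IsBiadditive mul) (hμ : IsBiadditive μ) (x y z : A) :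
    commutator mul x (commutator μ y z) + commutator mul y (commutator μ z x) +
        commutator mul z (commutator μ x y) + commutator μ (commutator mul x y) z +
        commutator μ (commutator mul y z) x + commutator μ (commutator mul z x) y =
      diff mul μ x y z + diff mul μ y z x + diff mul μ z x y +
        diff mul μ x z y + diff mul μ z y x +
        diff mul μ y x z := by
  simp only [commutator, diff, hmul.add_left, hmul.add_right, hμ.add_left,
    hμ.add_right]
  abel

theorem sum_commutator_commutator_square_eq_sum_diff
    (hmul : IsBiadditive mul) (hμ : IsBiadditive μ) (x z : A) :
    commutator mul x (commutator μ x z) + commutator mul z (μ x x) +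
        commutator μ (mul x x) z + commutator μ (commutator mul x z) x =
      diff mul μ x x z + diff mul μ x z x + diff mul μ z x x := by
  simp only [commutator, diff, hmul.add_left, hmul.add_right, hμ.add_left,
    hμ.add_right]
  abel

end Hochschild

open Hochschild in
theorem hochschild_cocycle_gives_lie_cocycle_general
    {K A : Type*} [Field K] [AddCommGroup A] [Module K A]
    (od : Submodule K A) (mul : A → A → A)
    (mul_add_left : ∀ a b c : A, mul (a + b) c = mul a c + mul b c)
    (mul_add_right : ∀ a b c : A, mul a (b + c) = mul a b + mul a c)
    (μ : A → A → A)
    (μ_add_left : ∀ a b c : A, μ (a + b) c = μ a c + μ b c)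
    (μ_add_right : ∀ a b c : A, μ a (b + c) = μ a b + μ a c)
    (μ_smul_left : ∀ (k : K) (a b : A), μ (k • a) b = k • μ a b)
    (μ_smul_right : ∀ (k : K) (a b : A), μ a (k • b) = k • μ a b)
    (hHoch : ∀ x y z : A,
      mul x (μ y z) + μ (mul x y) z + μ x (mul y z) + mul (μ x y) z = 0) :
    -- (i) `ω_μ` is a squaring-type cochain with polar form `φ_μ`
    (∀ (c : K), ∀ x ∈ od, μ (c • x) (c • x) = (c * c) • μ x x) ∧
    (∀ x ∈ od, ∀ y ∈ od,
      μ (x + y) (x + y) = μ x x + μ y y + (μ x y + μ y x)) ∧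
    -- (ii) the Chevalley–Eilenberg 3-cocycle condition for `φ_μ`
    (∀ x y z : A,
      (mul x (μ y z + μ z y) + mul (μ y z + μ z y) x) +
      (mul y (μ z x + μ x z) + mul (μ z x + μ x z) y) +
      (mul z (μ x y + μ y x) + mul (μ x y + μ y x) z) +
      (μ (mul x y + mul y x) z + μ z (mul x y + mul y x)) +
      (μ (mul y z + mul z y) x + μ x (mul y z + mul z y)) +
      (μ (mul z x + mul x z) y + μ y (mul z x + mul x z)) = 0) ∧
    -- (iii) the squaring-cocycle condition `δ²ω_μ = 0`
    (∀ x ∈ od, ∀ z : A,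
      (mul x (μ x z + μ z x) + mul (μ x z + μ z x) x) +
      (mul z (μ x x) + mul (μ x x) z) +
      (μ (mul x x) z + μ z (mul x x)) +
      (μ (mul x z + mul z x) x + μ x (mul x z + mul z x)) = 0) := by
  have hmul : IsBiadditive mul := ⟨mul_add_left, mul_add_right⟩
  have hμ : IsBiadditive μ := ⟨μ_add_left, μ_add_right⟩
  have hδ : ∀ x y z, diff mul μ x y z = 0 := hHoch
  refine ⟨fun c x _ => ?_, fun x _ y _ => apply_add_add_eq hμ x y, fun x y z => ?_,
    fun x _ z => ?_⟩
  · rw [μ_smul_left, μ_smul_right, smul_smul]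
  · exact (sum_commutator_commutator_eq_sum_diff hmul hμ x y z).trans
      (by simp only [hδ, add_zero])
  · exact (sum_commutator_commutator_square_eq_sum_diff hmul hμ x z).trans
      (by simp only [hδ, add_zero])

/-- Let `A` be an associative superalgebra over a field of
characteristic 2, viewed as a Lie superalgebra with bracket `[x,y] = xy + yx` and
squaring `s(a) = a²` on odd elements.  If `μ` is a bilinear Hochschild 2-cocycle on
`A`, then `(φ_μ, ω_μ)` with `φ_μ(x,y) = μ(x,y) + μ(y,x)` and `ω_μ(x) = μ(x,x)` is a
2-cocycle of the Lie superalgebra `A` with adjoint coefficients. -/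
theorem hochschild_cocycle_gives_lie_cocycle
    {K A : Type*} [Field K] [CharP K 2] [AddCommGroup A] [Module K A]
    (ev od : Submodule K A) (mul : A → A → A)
    (compl : IsCompl ev od)
    (mul_add_left : ∀ a b c : A, mul (a + b) c = mul a c + mul b c)
    (mul_add_right : ∀ a b c : A, mul a (b + c) = mul a b + mul a c)
    (mul_smul_left : ∀ (k : K) (a b : A), mul (k • a) b = k • mul a b)
    (mul_smul_right : ∀ (k : K) (a b : A), mul a (k • b) = k • mul a b)
    (mul_assoc' : ∀ a b c : A, mul (mul a b) c = mul a (mul b c))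
    (grade_ee : ∀ a ∈ ev, ∀ b ∈ ev, mul a b ∈ ev)
    (grade_eo : ∀ a ∈ ev, ∀ b ∈ od, mul a b ∈ od)
    (grade_oe : ∀ a ∈ od, ∀ b ∈ ev, mul a b ∈ od)
    (grade_oo : ∀ a ∈ od, ∀ b ∈ od, mul a b ∈ ev)
    (μ : A → A → A)
    (μ_add_left : ∀ a b c : A, μ (a + b) c = μ a c + μ b c)
    (μ_add_right : ∀ a b c : A, μ a (b + c) = μ a b + μ a c)
    (μ_smul_left : ∀ (k : K) (a b : A), μ (k • a) b = k • μ a b)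
    (μ_smul_right : ∀ (k : K) (a b : A), μ a (k • b) = k • μ a b)
    (hHoch : ∀ x y z : A,
      mul x (μ y z) + μ (mul x y) z + μ x (mul y z) + mul (μ x y) z = 0) :
    -- (i) `ω_μ` is a squaring-type cochain with polar form `φ_μ`
    (∀ (c : K), ∀ x ∈ od, μ (c • x) (c • x) = (c * c) • μ x x) ∧
    (∀ x ∈ od, ∀ y ∈ od,
      μ (x + y) (x + y) = μ x x + μ y y + (μ x y + μ y x)) ∧
    -- (ii) the Chevalley–Eilenberg 3-cocycle condition for `φ_μ`
    (∀ x y z : A,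
      (mul x (μ y z + μ z y) + mul (μ y z + μ z y) x) +
      (mul y (μ z x + μ x z) + mul (μ z x + μ x z) y) +
      (mul z (μ x y + μ y x) + mul (μ x y + μ y x) z) +
      (μ (mul x y + mul y x) z + μ z (mul x y + mul y x)) +
      (μ (mul y z + mul z y) x + μ x (mul y z + mul z y)) +
      (μ (mul z x + mul x z) y + μ y (mul z x + mul x z)) = 0) ∧
    -- (iii) the squaring-cocycle condition `δ²ω_μ = 0`
    (∀ x ∈ od, ∀ z : A,
      (mul x (μ x z + μ z x) + mul (μ x z + μ z x) x) +
      (mul z (μ x x) + mul (μ x x) z) +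
      (μ (mul x x) z + μ z (mul x x)) +
      (μ (mul x z + mul z x) x + μ x (mul x z + mul z x)) = 0) :=
  hochschild_cocycle_gives_lie_cocycle_general od mul mul_add_left mul_add_right μ μ_add_left
    μ_add_right μ_smul_left μ_smul_right hHoch
end

section
/- Let K be a field of characteristic 2, A an associative supercommutative superalgebra over K, (L, [-,-], s) a Lie superalgebra over K which is also an A-module, and ρ : L → Der(A) an A-linear morphism of Lie superalgebras. Fix a homogeneous K-basis of L. If the three Lie–Rinehart compatibility conditions — [x, ay] = a[x,y] + ρ_x(a)y for all a ∈ A, y ∈ L; s(ax) = a²s(x) + ρ_{ax}(a)x for all a ∈ A₀ with x odd; s(ax) = ρ_{ax}(a)x for all a ∈ A₁ with x even — hold whenever x runs over the chosen basis of L, then they hold for all x ∈ L. -/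
/-- An associative supercommutative superalgebra over a field of characteristic 2,
encoded as a predicate on the data: complementary submodules `ev`, `od` and a bilinear
associative commutative product `mul` with `a² = 0` for odd `a`. -/
structure IsSuperComm2 (K : Type*) [Field K] {A : Type*} [AddCommGroup A] [Module K A]
    (ev od : Submodule K A) (mul : A → A → A) : Prop where
  compl : IsCompl ev od
  add_left : ∀ a b c : A, mul (a + b) c = mul a c + mul b c
  smul_left : ∀ (k : K) (a b : A), mul (k • a) b = k • mul a b
  comm : ∀ a b : A, mul a b = mul b a
  assoc : ∀ a b c : A, mul (mul a b) c = mul a (mul b c)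
  alt_od : ∀ a ∈ od, mul a a = 0
  grade_ee : ∀ a ∈ ev, ∀ b ∈ ev, mul a b ∈ ev
  grade_eo : ∀ a ∈ ev, ∀ b ∈ od, mul a b ∈ od
  grade_oo : ∀ a ∈ od, ∀ b ∈ od, mul a b ∈ ev
/-- The underlying data of a Lie-Rinehart superalgebra in characteristic 2, *without*
the three Lie-Rinehart compatibility conditions between the bracket/squaring and the
`A`-module structure. -/
structure IsLieRinehartCore2 (K : Type*) [Field K] {A L : Type*}
    [AddCommGroup A] [Module K A] [AddCommGroup L] [Module K L]
    (evA odA : Submodule K A) (mulA : A → A → A)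
    (evL odL : Submodule K L) (br : L → L → L) (sq : L → L)
    (act : A → L → L) (ρ : L → A → A) : Prop where
  commA : IsSuperComm2 K evA odA mulA
  lieL : IsLieSuper2 K evL odL br sq
  act_add_left : ∀ (a b : A) (x : L), act (a + b) x = act a x + act b x
  act_add_right : ∀ (a : A) (x y : L), act a (x + y) = act a x + act a y
  act_smul_left : ∀ (k : K) (a : A) (x : L), act (k • a) x = k • act a x
  act_smul_right : ∀ (k : K) (a : A) (x : L), act a (k • x) = k • act a x
  act_mulA : ∀ (a b : A) (x : L), act (mulA a b) x = act a (act b x)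
  act_grade_ee : ∀ a ∈ evA, ∀ x ∈ evL, act a x ∈ evL
  act_grade_eo : ∀ a ∈ evA, ∀ x ∈ odL, act a x ∈ odL
  act_grade_oe : ∀ a ∈ odA, ∀ x ∈ evL, act a x ∈ odL
  act_grade_oo : ∀ a ∈ odA, ∀ x ∈ odL, act a x ∈ evL
  rho_add : ∀ (x y : L) (a : A), ρ (x + y) a = ρ x a + ρ y a
  rho_smul : ∀ (k : K) (x : L) (a : A), ρ (k • x) a = k • ρ x a
  rho_arg_add : ∀ (x : L) (a b : A), ρ x (a + b) = ρ x a + ρ x b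
  rho_arg_smul : ∀ (x : L) (k : K) (a : A), ρ x (k • a) = k • ρ x a
  rho_der : ∀ (x : L) (a b : A), ρ x (mulA a b) = mulA (ρ x a) b + mulA a (ρ x b)
  rho_br : ∀ (x y : L) (a : A), ρ (br x y) a = ρ x (ρ y a) + ρ y (ρ x a)
  rho_sq : ∀ x ∈ odL, ∀ a : A, ρ (sq x) a = ρ x (ρ x a)
  rho_grade_ee : ∀ x ∈ evL, ∀ a ∈ evA, ρ x a ∈ evA
  rho_grade_eo : ∀ x ∈ evL, ∀ a ∈ odA, ρ x a ∈ odA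
  rho_grade_oe : ∀ x ∈ odL, ∀ a ∈ evA, ρ x a ∈ odA
  rho_grade_oo : ∀ x ∈ odL, ∀ a ∈ odA, ρ x a ∈ evA
  rho_act : ∀ (a : A) (x : L) (b : A), ρ (act a x) b = mulA a (ρ x b)

/-!
Each of the three conditions, viewed as a property of `x`, is stable under sums and scalar
multiples, so it propagates from the basis to its span. For the bracket condition this is plain
bilinearity. For the squaring conditions, once the bracket condition holds everywhere it gives
`[a x, a y] = a² [x, y] + a ρ_x(a) y + a ρ_y(a) x`, which is exactly the cross term produced by
`s(a x + a y) = s(a x) + s(a y) + [a x, a y]`; since the squaring conditions only concern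
homogeneous `x`, they propagate along the span of the homogeneous basis vectors of the right
parity, and this span is the whole homogeneous component.
-/

open Submodule

theorem Submodule.le_span_inter_of_isCompl {R M : Type*} [Ring R] [AddCommGroup M] [Module R M]
    {p q : Submodule R M} (hpq : IsCompl p q) {s : Set M} (hs : ⊤ ≤ span R s)
    (hhom : ∀ x ∈ s, x ∈ p ∨ x ∈ q) : p ≤ span R (s ∩ p) := by
  intro x hx
  rw [← projection_apply_of_mem_left hpq hx]
  refine span_le.mpr ?_ (apply_mem_span_image_of_mem_span _ (hs mem_top))
  rintro _ ⟨y, hy, rfl⟩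
  rcases hhom y hy with hp | hq
  · rw [projection_apply_of_mem_left hpq hp]
    exact subset_span ⟨hy, hp⟩
  · rw [projection_apply_of_mem_right hpq hq]
    exact zero_mem _

namespace IsSuperComm2

variable {K A : Type*} [Field K] [AddCommGroup A] [Module K A] {ev od : Submodule K A}
  {mul : A → A → A}

theorem add_right (h : IsSuperComm2 K ev od mul) (a b c : A) :
    mul a (b + c) = mul a b + mul a c := by
  rw [h.comm, h.add_left, h.comm b, h.comm c]

theorem smul_right (h : IsSuperComm2 K ev od mul) (k : K) (a b : A) :
    mul a (k • b) = k • mul a b := by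
  rw [h.comm, h.smul_left, h.comm]

end IsSuperComm2

namespace IsLieSuper2

variable {K L : Type*} [Field K] [AddCommGroup L] [Module K L] {ev od : Submodule K L}
  {br : L → L → L} {sq : L → L}

theorem br_zero_left (h : IsLieSuper2 K ev od br sq) (y : L) : br 0 y = 0 :=
  (AddMonoidHom.mk' (br · y) fun x z => h.add_left x z y).map_zero

theorem sq_zero (h : IsLieSuper2 K ev od br sq) : sq 0 = 0 := by
  have h00 := h.sq_add 0 od.zero_mem 0 od.zero_mem
  rwa [add_zero, h.br_zero_left, add_zero, left_eq_add] at h00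

end IsLieSuper2

namespace IsLieRinehartCore2

variable {K A L : Type*} [Field K] [AddCommGroup A] [Module K A] [AddCommGroup L] [Module K L]
  {evA odA : Submodule K A} {mulA : A → A → A} {evL odL : Submodule K L} {br : L → L → L}
  {sq : L → L} {act : A → L → L} {ρ : L → A → A}

theorem act_zero_left (h : IsLieRinehartCore2 K evA odA mulA evL odL br sq act ρ) (x : L) :
    act 0 x = 0 :=
  (AddMonoidHom.mk' (act · x) fun a b => h.act_add_left a b x).map_zero

theorem act_zero_right (h : IsLieRinehartCore2 K evA odA mulA evL odL br sq act ρ) (a : A) :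
    act a 0 = 0 :=
  (AddMonoidHom.mk' (act a) (h.act_add_right a)).map_zero

theorem rho_zero (h : IsLieRinehartCore2 K evA odA mulA evL odL br sq act ρ) (a : A) :
    ρ 0 a = 0 :=
  (AddMonoidHom.mk' (ρ · a) fun x y => h.rho_add x y a).map_zero

theorem br_act_of_mem_span (h : IsLieRinehartCore2 K evA odA mulA evL odL br sq act ρ)
    {s : Set L} (hs : ∀ x ∈ s, ∀ y a, br x (act a y) = act a (br x y) + act (ρ x a) y)
    {x : L} (hx : x ∈ span K s) (y : L) (a : A) :
    br x (act a y) = act a (br x y) + act (ρ x a) y := by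
  induction hx using span_induction generalizing y a with
  | mem z hz => exact hs z hz y a
  | zero =>
    rw [h.lieL.br_zero_left, h.lieL.br_zero_left, h.rho_zero, h.act_zero_right,
      h.act_zero_left, add_zero]
  | add u v _ _ ihu ihv =>
    rw [h.lieL.add_left, h.lieL.add_left, h.rho_add, h.act_add_right, h.act_add_left, ihu, ihv]
    abel
  | smul c u _ ihu =>
    rw [h.lieL.smul_left, h.lieL.smul_left, h.rho_smul, h.act_smul_right, h.act_smul_left, ihu,
      smul_add]

theorem br_act_act (h : IsLieRinehartCore2 K evA odA mulA evL odL br sq act ρ)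
    (hbr : ∀ (x y : L) (a : A), br x (act a y) = act a (br x y) + act (ρ x a) y)
    (a : A) (x y : L) :
    br (act a x) (act a y) =
      act (mulA a a) (br x y) + act (mulA a (ρ x a)) y + act (mulA a (ρ y a)) x :=
  calc br (act a x) (act a y)
      = act a (br (act a x) y) + act (ρ (act a x) a) y := hbr _ y a
    _ = act a (act a (br y x) + act (ρ y a) x) + act (mulA a (ρ x a)) y := by
        rw [h.rho_act, h.lieL.symm (act a x) y, hbr y x a]
    _ = act (mulA a a) (br x y) + act (mulA a (ρ x a)) y + act (mulA a (ρ y a)) x := by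
        rw [h.act_add_right, ← h.act_mulA, ← h.act_mulA, h.lieL.symm y x]
        abel

theorem sq_act_add (h : IsLieRinehartCore2 K evA odA mulA evL odL br sq act ρ)
    (hbr : ∀ (x y : L) (a : A), br x (act a y) = act a (br x y) + act (ρ x a) y)
    {a : A} {x y : L} (hx : act a x ∈ odL) (hy : act a y ∈ odL) :
    sq (act a (x + y)) = sq (act a x) + sq (act a y) + act (mulA a a) (br x y)
      + act (mulA a (ρ x a)) y + act (mulA a (ρ y a)) x := by
  rw [h.act_add_right, h.lieL.sq_add _ hx _ hy, h.br_act_act hbr]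
  abel

theorem sq_act_smul (h : IsLieRinehartCore2 K evA odA mulA evL odL br sq act ρ)
    {a : A} {x : L} (hx : act a x ∈ odL) (c : K) :
    sq (act a (c • x)) = (c * c) • sq (act a x) := by
  rw [h.act_smul_right, h.lieL.sq_smul c _ hx]

theorem sq_act_of_mem_span_odd (h : IsLieRinehartCore2 K evA odA mulA evL odL br sq act ρ)
    (hbr : ∀ (x y : L) (a : A), br x (act a y) = act a (br x y) + act (ρ x a) y)
    {a : A} (ha : a ∈ evA) {s : Set L} (hs : s ⊆ odL)
    (hbasis : ∀ x ∈ s, sq (act a x) = act (mulA a a) (sq x) + act (ρ (act a x) a) x)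
    {x : L} (hx : x ∈ span K s) :
    sq (act a x) = act (mulA a a) (sq x) + act (ρ (act a x) a) x := by
  simp only [h.rho_act] at hbasis ⊢
  have hodd : ∀ z ∈ span K s, z ∈ odL := fun z hz => span_le.mpr hs hz
  induction hx using span_induction with
  | mem z hz => exact hbasis z hz
  | zero => rw [h.act_zero_right, h.lieL.sq_zero, h.act_zero_right, h.act_zero_right, add_zero]
  | add u v hu hv ihu ihv =>
    rw [h.sq_act_add hbr (h.act_grade_eo a ha u (hodd u hu)) (h.act_grade_eo a ha v (hodd v hv)),
      ihu, ihv, h.lieL.sq_add u (hodd u hu) v (hodd v hv), h.rho_add, h.commA.add_right]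
    simp only [h.act_add_right, h.act_add_left]
    abel
  | smul c u hu ihu =>
    rw [h.sq_act_smul (h.act_grade_eo a ha u (hodd u hu)), ihu,
      h.lieL.sq_smul c u (hodd u hu), h.rho_smul, h.commA.smul_right, h.act_smul_left,
      h.act_smul_right, h.act_smul_right, smul_add, smul_smul]

theorem sq_act_of_mem_span_even (h : IsLieRinehartCore2 K evA odA mulA evL odL br sq act ρ)
    (hbr : ∀ (x y : L) (a : A), br x (act a y) = act a (br x y) + act (ρ x a) y)
    {a : A} (ha : a ∈ odA) {s : Set L} (hs : s ⊆ evL)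
    (hbasis : ∀ x ∈ s, sq (act a x) = act (ρ (act a x) a) x)
    {x : L} (hx : x ∈ span K s) :
    sq (act a x) = act (ρ (act a x) a) x := by
  simp only [h.rho_act] at hbasis ⊢
  have heven : ∀ z ∈ span K s, z ∈ evL := fun z hz => span_le.mpr hs hz
  induction hx using span_induction with
  | mem z hz => exact hbasis z hz
  | zero => rw [h.act_zero_right, h.lieL.sq_zero, h.act_zero_right]
  | add u v hu hv ihu ihv =>
    rw [h.sq_act_add hbr (h.act_grade_oe a ha u (heven u hu))
      (h.act_grade_oe a ha v (heven v hv)), ihu, ihv, h.commA.alt_od a ha, h.act_zero_left,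
      h.rho_add, h.commA.add_right]
    simp only [h.act_add_right, h.act_add_left]
    abel
  | smul c u hu ihu =>
    rw [h.sq_act_smul (h.act_grade_oe a ha u (heven u hu)), ihu, h.rho_smul,
      h.commA.smul_right, h.act_smul_left, h.act_smul_right, smul_smul]

end IsLieRinehartCore2

theorem lieRinehart_conditions_of_basis_general
    {K A L : Type*} [Field K]
    [AddCommGroup A] [Module K A] [AddCommGroup L] [Module K L]
    (evA odA : Submodule K A) (mulA : A → A → A)
    (evL odL : Submodule K L) (br : L → L → L) (sq : L → L)
    (act : A → L → L) (ρ : L → A → A)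
    (hcore : IsLieRinehartCore2 K evA odA mulA evL odL br sq act ρ)
    (ι : Type*) (e : ι → L)
    (hhom : ∀ i, e i ∈ evL ∨ e i ∈ odL)
    (hspan : ⊤ ≤ Submodule.span K (Set.range e))
    (h1 : ∀ (i : ι) (a : A) (y : L),
      br (e i) (act a y) = act a (br (e i) y) + act (ρ (e i) a) y)
    (h2 : ∀ i, e i ∈ odL → ∀ a ∈ evA,
      sq (act a (e i)) = act (mulA a a) (sq (e i)) + act (ρ (act a (e i)) a) (e i))
    (h3 : ∀ i, e i ∈ evL → ∀ a ∈ odA,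
      sq (act a (e i)) = act (ρ (act a (e i)) a) (e i)) :
    (∀ (x y : L) (a : A), br x (act a y) = act a (br x y) + act (ρ x a) y) ∧
    (∀ a ∈ evA, ∀ x ∈ odL,
      sq (act a x) = act (mulA a a) (sq x) + act (ρ (act a x) a) x) ∧
    (∀ a ∈ odA, ∀ x ∈ evL,
      sq (act a x) = act (ρ (act a x) a) x) := by
  have hbr : ∀ (x y : L) (a : A), br x (act a y) = act a (br x y) + act (ρ x a) y :=
    fun x => hcore.br_act_of_mem_span (by rintro _ ⟨i, rfl⟩; exact fun y a => h1 i a y) (hspan mem_top)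
  have hhom' : ∀ x ∈ Set.range e, x ∈ evL ∨ x ∈ odL := by
    rintro _ ⟨i, rfl⟩
    exact hhom i
  refine ⟨hbr, fun a ha x hx => ?_, fun a ha x hx => ?_⟩
  · refine hcore.sq_act_of_mem_span_odd hbr ha Set.inter_subset_right ?_
      (le_span_inter_of_isCompl hcore.lieL.compl.symm hspan (fun x hx => (hhom' x hx).symm) hx)
    rintro _ ⟨⟨i, rfl⟩, hi⟩
    exact h2 i hi a ha
  · refine hcore.sq_act_of_mem_span_even hbr ha Set.inter_subset_right ?_
      (le_span_inter_of_isCompl hcore.lieL.compl hspan hhom' hx)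
    rintro _ ⟨⟨i, rfl⟩, hi⟩
    exact h3 i hi a ha

/-- If the three Lie-Rinehart compatibility conditions hold whenever
`x` runs over a fixed homogeneous basis `e` of `L`, then they hold for all `x ∈ L`. -/
theorem lieRinehart_conditions_of_basis
    {K A L : Type*} [Field K] [CharP K 2]
    [AddCommGroup A] [Module K A] [AddCommGroup L] [Module K L]
    (evA odA : Submodule K A) (mulA : A → A → A)
    (evL odL : Submodule K L) (br : L → L → L) (sq : L → L)
    (act : A → L → L) (ρ : L → A → A)
    (hcore : IsLieRinehartCore2 K evA odA mulA evL odL br sq act ρ)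
    (ι : Type*) (e : ι → L)
    (hhom : ∀ i, e i ∈ evL ∨ e i ∈ odL)
    (hindep : LinearIndependent K e)
    (hspan : ⊤ ≤ Submodule.span K (Set.range e))
    (h1 : ∀ (i : ι) (a : A) (y : L),
      br (e i) (act a y) = act a (br (e i) y) + act (ρ (e i) a) y)
    (h2 : ∀ i, e i ∈ odL → ∀ a ∈ evA,
      sq (act a (e i)) = act (mulA a a) (sq (e i)) + act (ρ (act a (e i)) a) (e i))
    (h3 : ∀ i, e i ∈ evL → ∀ a ∈ odA,
      sq (act a (e i)) = act (ρ (act a (e i)) a) (e i)) :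
    (∀ (x y : L) (a : A), br x (act a y) = act a (br x y) + act (ρ x a) y) ∧
    (∀ a ∈ evA, ∀ x ∈ odL,
      sq (act a x) = act (mulA a a) (sq x) + act (ρ (act a x) a) x) ∧
    (∀ a ∈ odA, ∀ x ∈ evL,
      sq (act a x) = act (ρ (act a x) a) x) :=
  lieRinehart_conditions_of_basis_general evA odA mulA evL odL br sq act ρ hcore ι e hhom hspan h1
    h2 h3
end

section
/- Let (A, L, ρ) be a Lie-Rinehart superalgebra over a field K of characteristic 2, and let U(A, L, ρ) be its universal enveloping algebra with canonical maps i_A : A → U(A,L,ρ) and i_L : L → U(A,L,ρ). Then for every triple (B, r_A, r_L), where B is an associative superalgebra over K, r_A : A → B is an even morphism of associative superalgebras, and r_L : L → B is an even morphism of Lie superalgebras (B being a Lie superalgebra via the commutator and the squaring b ↦ b²) satisfying r_L(ax) = r_A(a)r_L(x) and r_L(x)r_A(a) = r_A(a)r_L(x) + r_A(ρ_x(a)) for all a ∈ A and x ∈ L, there exists a unique even morphism of associative superalgebras f : U(A,L,ρ) → B such that f ∘ i_A = r_A and f ∘ i_L = r_L. -/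
/-- A Lie-Rinehart superalgebra in characteristic 2: an associative supercommutative
superalgebra `A`, a Lie superalgebra `L` which is an `A`-module via `act`, and an
`A`-linear morphism of Lie superalgebras `ρ : L → Der(A)` (encoded as a bilinear-type
map `ρ : L → A → A` each `ρ x` being a derivation), subject to the three
Lie-Rinehart compatibility conditions. -/
structure IsLieRinehart2 (K : Type*) [Field K] {A L : Type*}
    [AddCommGroup A] [Module K A] [AddCommGroup L] [Module K L]
    (evA odA : Submodule K A) (mulA : A → A → A)
    (evL odL : Submodule K L) (br : L → L → L) (sq : L → L)
    (act : A → L → L) (ρ : L → A → A) : Prop where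
  commA : IsSuperComm2 K evA odA mulA
  lieL : IsLieSuper2 K evL odL br sq
  act_add_left : ∀ (a b : A) (x : L), act (a + b) x = act a x + act b x
  act_add_right : ∀ (a : A) (x y : L), act a (x + y) = act a x + act a y
  act_smul_left : ∀ (k : K) (a : A) (x : L), act (k • a) x = k • act a x
  act_smul_right : ∀ (k : K) (a : A) (x : L), act a (k • x) = k • act a x
  act_mulA : ∀ (a b : A) (x : L), act (mulA a b) x = act a (act b x)
  act_grade_ee : ∀ a ∈ evA, ∀ x ∈ evL, act a x ∈ evL
  act_grade_eo : ∀ a ∈ evA, ∀ x ∈ odL, act a x ∈ odL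
  act_grade_oe : ∀ a ∈ odA, ∀ x ∈ evL, act a x ∈ odL
  act_grade_oo : ∀ a ∈ odA, ∀ x ∈ odL, act a x ∈ evL
  rho_add : ∀ (x y : L) (a : A), ρ (x + y) a = ρ x a + ρ y a
  rho_smul : ∀ (k : K) (x : L) (a : A), ρ (k • x) a = k • ρ x a
  rho_arg_add : ∀ (x : L) (a b : A), ρ x (a + b) = ρ x a + ρ x b
  rho_arg_smul : ∀ (x : L) (k : K) (a : A), ρ x (k • a) = k • ρ x a
  rho_der : ∀ (x : L) (a b : A), ρ x (mulA a b) = mulA (ρ x a) b + mulA a (ρ x b)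
  rho_br : ∀ (x y : L) (a : A), ρ (br x y) a = ρ x (ρ y a) + ρ y (ρ x a)
  rho_sq : ∀ x ∈ odL, ∀ a : A, ρ (sq x) a = ρ x (ρ x a)
  rho_grade_ee : ∀ x ∈ evL, ∀ a ∈ evA, ρ x a ∈ evA
  rho_grade_eo : ∀ x ∈ evL, ∀ a ∈ odA, ρ x a ∈ odA
  rho_grade_oe : ∀ x ∈ odL, ∀ a ∈ evA, ρ x a ∈ odA
  rho_grade_oo : ∀ x ∈ odL, ∀ a ∈ odA, ρ x a ∈ evA
  rho_act : ∀ (a : A) (x : L) (b : A), ρ (act a x) b = mulA a (ρ x b)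
  br_act : ∀ (x y : L) (a : A), br x (act a y) = act a (br x y) + act (ρ x a) y
  sq_act_ev : ∀ a ∈ evA, ∀ x ∈ odL,
    sq (act a x) = act (mulA a a) (sq x) + act (ρ (act a x) a) x
  sq_act_od : ∀ a ∈ odA, ∀ x ∈ evL,
    sq (act a x) = act (ρ (act a x) a) x

section EnvelopingConstruction
variable (K : Type*) [Field K] {A L : Type*}
  [AddCommGroup A] [Module K A] [AddCommGroup L] [Module K L]

/-- The bracket on the Lie superalgebra `A ⊕ L` attached to Lie-Rinehart data. -/
def alBr (br : L → L → L) (ρ : L → A → A) (p q : A × L) : A × L :=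
  (ρ p.2 q.1 + ρ q.2 p.1, br p.2 q.2)

/-- The squaring on the Lie superalgebra `A ⊕ L` attached to Lie-Rinehart data. -/
def alSq (sq : L → L) (ρ : L → A → A) (p : A × L) : A × L :=
  (ρ p.2 p.1, sq p.2)

/-- The relations defining the enveloping algebra `U(A ⊕ L)` of the Lie superalgebra
`A ⊕ L` in characteristic 2: `u⊗v + v⊗u + [u,v] = 0` and, for odd `w`,
`w⊗w + s(w) = 0`. -/
inductive EnvRel (odA : Submodule K A) (odL : Submodule K L)
    (br : L → L → L) (sq : L → L) (ρ : L → A → A) :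
    TensorAlgebra K (A × L) → TensorAlgebra K (A × L) → Prop
  | comm_rel (u v : A × L) :
      EnvRel odA odL br sq ρ
        (TensorAlgebra.ι K u * TensorAlgebra.ι K v +
          TensorAlgebra.ι K v * TensorAlgebra.ι K u +
          TensorAlgebra.ι K (alBr br ρ u v)) 0
  | sq_rel (w : A × L) (hw : w ∈ odA.prod odL) :
      EnvRel odA odL br sq ρ
        (TensorAlgebra.ι K w * TensorAlgebra.ι K w +
          TensorAlgebra.ι K (alSq sq ρ w)) 0

variable (odA : Submodule K A) (odL : Submodule K L)
  (mulA : A → A → A) (br : L → L → L) (sq : L → L) (act : A → L → L) (ρ : L → A → A)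

/-- The canonical map `A ⊕ L → U(A ⊕ L)`. -/
noncomputable def envMap : A × L → RingQuot (EnvRel K odA odL br sq ρ) :=
  fun u => RingQuot.mkAlgHom K (EnvRel K odA odL br sq ρ) (TensorAlgebra.ι K u)

/-- The subalgebra `Ū(A ⊕ L)` of `U(A ⊕ L)` generated by the image of `A ⊕ L`. -/
noncomputable def envBar : Subalgebra K (RingQuot (EnvRel K odA odL br sq ρ)) :=
  Algebra.adjoin K (Set.range (envMap K odA odL br sq ρ))

/-- The canonical map `A ⊕ L → Ū(A ⊕ L)`. -/
noncomputable def envMapBar : A × L → ↥(envBar K odA odL br sq ρ) :=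
  fun u => ⟨envMap K odA odL br sq ρ u, Algebra.subset_adjoin ⟨u, rfl⟩⟩

/-- The relations generating the ideal `J`: `i(a)·i(b + x) + i(ab + ax) = 0`. -/
inductive JRel : ↥(envBar K odA odL br sq ρ) → ↥(envBar K odA odL br sq ρ) → Prop
  | rel (a b : A) (x : L) :
      JRel (envMapBar K odA odL br sq ρ (a, 0) * envMapBar K odA odL br sq ρ (b, x) +
            envMapBar K odA odL br sq ρ (mulA a b, act a x)) 0

/-- The universal enveloping algebra `U(A, L, ρ)` of a Lie-Rinehart superalgebra in
characteristic 2. -/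
noncomputable def LREnv : Type _ :=
  RingQuot (JRel K odA odL mulA br sq act ρ)

noncomputable instance : Ring (LREnv K odA odL mulA br sq act ρ) := by
  unfold LREnv; exact RingQuot.instRing (JRel K odA odL mulA br sq act ρ)

noncomputable instance : Algebra K (LREnv K odA odL mulA br sq act ρ) := by
  unfold LREnv; exact RingQuot.instAlgebra (JRel K odA odL mulA br sq act ρ)

/-- The canonical map `i_A : A → U(A, L, ρ)`. -/
noncomputable def lrIA : A → LREnv K odA odL mulA br sq act ρ :=
  fun a => RingQuot.mkAlgHom K (JRel K odA odL mulA br sq act ρ)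
    (envMapBar K odA odL br sq ρ (a, 0))

/-- The canonical map `i_L : L → U(A, L, ρ)`. -/
noncomputable def lrIL : L → LREnv K odA odL mulA br sq act ρ :=
  fun x => RingQuot.mkAlgHom K (JRel K odA odL mulA br sq act ρ)
    (envMapBar K odA odL br sq ρ (0, x))

end EnvelopingConstruction

/-! The algebra map is obtained by lifting `r_A ⊕ r_L : A ⊕ L → B` through the tensor algebra,
then through the relations of `U(A ⊕ L)` (the hypotheses on `r_A`, `r_L` make every relation
collapse to a sum of terms `b + b = 0`), restricting to `Ū(A ⊕ L)`, and finally through `J`.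
Uniqueness holds because `U(A, L, ρ)` is generated by `i_A(A)` and `i_L(L)`. -/

theorem add_self_eq_zero_of_charP_two_scalars {K M : Type*} [Semiring K] [CharP K 2]
    [AddCommMonoid M] [Module K M] (m : M) : m + m = 0 := by
  rw [← two_smul K m, CharTwo.two_eq_zero, zero_smul]

section LieRinehartEnvelope

variable {K A L : Type*} [Field K] [AddCommGroup A] [Module K A] [AddCommGroup L] [Module K L]
  {odA : Submodule K A} {odL : Submodule K L} {mulA : A → A → A} {br : L → L → L}
  {sq : L → L} {act : A → L → L} {ρ : L → A → A}

theorem lift_coprod_eq_of_envRel [CharP K 2] {B : Type*} [Ring B] [Algebra K B]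
    {rA : A →ₗ[K] B} {rL : L →ₗ[K] B}
    (hrA_comm : ∀ a b : A, Commute (rA a) (rA b))
    (hrA_sq : ∀ a ∈ odA, rA a * rA a = 0)
    (hrL_br : ∀ x y : L, rL (br x y) = rL x * rL y + rL y * rL x)
    (hrL_sq : ∀ x ∈ odL, rL (sq x) = rL x * rL x)
    (hcomp : ∀ (x : L) (a : A), rL x * rA a = rA a * rL x + rA (ρ x a))
    {s t : TensorAlgebra K (A × L)} (h : EnvRel K odA odL br sq ρ s t) :
    TensorAlgebra.lift K (rA.coprod rL) s = TensorAlgebra.lift K (rA.coprod rL) t := by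
  have two : ∀ b : B, b + b = 0 := add_self_eq_zero_of_charP_two_scalars (K := K)
  cases h with
  | comm_rel u v =>
    simp only [map_add, map_mul, map_zero, TensorAlgebra.lift_ι_apply, LinearMap.coprod_apply,
      alBr, add_mul, mul_add, hcomp, hrL_br, (hrA_comm v.1 u.1).eq]
    abel_nf
    simp only [two_zsmul, two]
  | sq_rel w hw =>
    obtain ⟨a, x⟩ := w
    simp only [map_add, map_mul, map_zero, TensorAlgebra.lift_ι_apply, LinearMap.coprod_apply,
      alSq, add_mul, mul_add, hcomp, hrA_sq a hw.1, hrL_sq x hw.2]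
    abel_nf
    simp only [two_zsmul, two]

theorem envMapBar_add (u v : A × L) :
    envMapBar K odA odL br sq ρ (u + v) =
      envMapBar K odA odL br sq ρ u + envMapBar K odA odL br sq ρ v :=
  Subtype.ext <| by simp only [envMapBar, envMap, map_add]; rfl

theorem mkAlgHom_envMapBar (a : A) (x : L) :
    RingQuot.mkAlgHom K (JRel K odA odL mulA br sq act ρ) (envMapBar K odA odL br sq ρ (a, x)) =
      lrIA K odA odL mulA br sq act ρ a + lrIL K odA odL mulA br sq act ρ x := by
  rw [← add_zero a, ← zero_add x, ← Prod.mk_add_mk, envMapBar_add, map_add, add_zero, zero_add]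
  rfl

theorem envBar_algHom_ext {C : Type*} [Semiring C] [Algebra K C]
    {f g : envBar K odA odL br sq ρ →ₐ[K] C}
    (h : ∀ u, f (envMapBar K odA odL br sq ρ u) = g (envMapBar K odA odL br sq ρ u)) : f = g :=
  AlgHom.adjoin_ext <| by rintro _ ⟨u, rfl⟩; exact h u

theorem lrEnv_algHom_ext {C : Type*} [Semiring C] [Algebra K C]
    {f g : LREnv K odA odL mulA br sq act ρ →ₐ[K] C}
    (hA : ∀ a, f (lrIA K odA odL mulA br sq act ρ a) = g (lrIA K odA odL mulA br sq act ρ a))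
    (hL : ∀ x, f (lrIL K odA odL mulA br sq act ρ x) = g (lrIL K odA odL mulA br sq act ρ x)) :
    f = g :=
  RingQuot.ringQuot_ext' K f g <| envBar_algHom_ext fun ⟨a, x⟩ => by
    change f (RingQuot.mkAlgHom K _ _) = g (RingQuot.mkAlgHom K _ _)
    rw [mkAlgHom_envMapBar, map_add, map_add, hA, hL]

theorem exists_lrEnv_lift [CharP K 2] {B : Type*} [Ring B] [Algebra K B]
    {rA : A →ₗ[K] B} {rL : L →ₗ[K] B}
    (hrA_mul : ∀ a b : A, rA (mulA a b) = rA a * rA b)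
    (hrA_comm : ∀ a b : A, Commute (rA a) (rA b))
    (hrA_sq : ∀ a ∈ odA, rA a * rA a = 0)
    (hrL_br : ∀ x y : L, rL (br x y) = rL x * rL y + rL y * rL x)
    (hrL_sq : ∀ x ∈ odL, rL (sq x) = rL x * rL x)
    (hcomp1 : ∀ (a : A) (x : L), rL (act a x) = rA a * rL x)
    (hcomp2 : ∀ (x : L) (a : A), rL x * rA a = rA a * rL x + rA (ρ x a)) :
    ∃ f : LREnv K odA odL mulA br sq act ρ →ₐ[K] B,
      (∀ a : A, f (lrIA K odA odL mulA br sq act ρ a) = rA a) ∧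
      (∀ x : L, f (lrIL K odA odL mulA br sq act ρ x) = rL x) := by
  let φ : envBar K odA odL br sq ρ →ₐ[K] B :=
    (RingQuot.liftAlgHom K ⟨TensorAlgebra.lift K (rA.coprod rL),
      fun _ _ => lift_coprod_eq_of_envRel hrA_comm hrA_sq hrL_br hrL_sq hcomp2⟩).comp
      (envBar K odA odL br sq ρ).val
  have hφ (u : A × L) : φ (envMapBar K odA odL br sq ρ u) = rA u.1 + rL u.2 := by
    simp [φ, envMapBar, envMap, RingQuot.liftAlgHom_mkAlgHom_apply]
  have hJ : ∀ ⦃s t⦄, JRel K odA odL mulA br sq act ρ s t → φ s = φ t := by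
    rintro _ _ ⟨a, b, x⟩
    simp only [map_add, map_mul, map_zero, hφ, hrA_mul, hcomp1, add_zero, mul_add]
    exact add_self_eq_zero_of_charP_two_scalars (K := K) _
  refine ⟨RingQuot.liftAlgHom K ⟨φ, hJ⟩, fun a => ?_, fun x => ?_⟩
  · exact (RingQuot.liftAlgHom_mkAlgHom_apply K φ hJ _).trans <| by simp [hφ]
  · exact (RingQuot.liftAlgHom_mkAlgHom_apply K φ hJ _).trans <| by simp [hφ]

end LieRinehartEnvelope

theorem lieRinehart_enveloping_universal_property_general
    {K A L : Type*} [Field K] [CharP K 2]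
    [AddCommGroup A] [Module K A] [AddCommGroup L] [Module K L]
    (evA odA : Submodule K A) (mulA : A → A → A)
    (evL odL : Submodule K L) (br : L → L → L) (sq : L → L)
    (act : A → L → L) (ρ : L → A → A)
    (hLR : IsLieRinehart2 K evA odA mulA evL odL br sq act ρ)
    (B : Type*) [Ring B] [Algebra K B]
    (rA : A →ₗ[K] B) (rL : L →ₗ[K] B)
    (hrA_mul : ∀ a b : A, rA (mulA a b) = rA a * rA b)
    (hrL_br : ∀ x y : L, rL (br x y) = rL x * rL y + rL y * rL x)
    (hrL_sq : ∀ x ∈ odL, rL (sq x) = rL x * rL x)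
    (hcomp1 : ∀ (a : A) (x : L), rL (act a x) = rA a * rL x)
    (hcomp2 : ∀ (x : L) (a : A), rL x * rA a = rA a * rL x + rA (ρ x a)) :
    ∃! f : LREnv K odA odL mulA br sq act ρ →ₐ[K] B,
      (∀ a : A, f (lrIA K odA odL mulA br sq act ρ a) = rA a) ∧
      (∀ x : L, f (lrIL K odA odL mulA br sq act ρ x) = rL x) := by
  have hrA_comm (a b : A) : Commute (rA a) (rA b) := by
    rw [Commute, SemiconjBy, ← hrA_mul, ← hrA_mul, hLR.commA.comm]
  have hrA_sq (a : A) (ha : a ∈ odA) : rA a * rA a = 0 := by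
    rw [← hrA_mul, hLR.commA.alt_od a ha, map_zero]
  obtain ⟨f, hfA, hfL⟩ :=
    exists_lrEnv_lift hrA_mul hrA_comm hrA_sq hrL_br hrL_sq hcomp1 hcomp2
  refine ⟨f, ⟨hfA, hfL⟩, fun g ⟨hgA, hgL⟩ => ?_⟩
  exact lrEnv_algHom_ext (fun a => (hgA a).trans (hfA a).symm)
    (fun x => (hgL x).trans (hfL x).symm)

/-- The universal property of the universal enveloping algebra
`U(A, L, ρ)` of a Lie-Rinehart superalgebra in characteristic 2: for every
associative superalgebra `B`, every even associative superalgebra morphism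
`r_A : A → B` and every even Lie superalgebra morphism `r_L : L → B` (with the
commutator bracket and squaring `b ↦ b²` on `B`) satisfying
`r_L(ax) = r_A(a) r_L(x)` and `r_L(x) r_A(a) = r_A(a) r_L(x) + r_A(ρ_x(a))`, there
is a unique morphism of associative algebras `f : U(A, L, ρ) → B` with
`f ∘ i_A = r_A` and `f ∘ i_L = r_L`. -/
theorem lieRinehart_enveloping_universal_property
    {K A L : Type*} [Field K] [CharP K 2]
    [AddCommGroup A] [Module K A] [AddCommGroup L] [Module K L]
    (evA odA : Submodule K A) (mulA : A → A → A)
    (evL odL : Submodule K L) (br : L → L → L) (sq : L → L)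
    (act : A → L → L) (ρ : L → A → A)
    (hLR : IsLieRinehart2 K evA odA mulA evL odL br sq act ρ)
    (B : Type*) [Ring B] [Algebra K B]
    (evB odB : Submodule K B) (hBcompl : IsCompl evB odB)
    (hB_ee : ∀ b ∈ evB, ∀ b' ∈ evB, b * b' ∈ evB)
    (hB_eo : ∀ b ∈ evB, ∀ b' ∈ odB, b * b' ∈ odB)
    (hB_oe : ∀ b ∈ odB, ∀ b' ∈ evB, b * b' ∈ odB)
    (hB_oo : ∀ b ∈ odB, ∀ b' ∈ odB, b * b' ∈ evB)
    (rA : A →ₗ[K] B) (rL : L →ₗ[K] B)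
    (hrA_mul : ∀ a b : A, rA (mulA a b) = rA a * rA b)
    (hrA_ev : ∀ a ∈ evA, rA a ∈ evB) (hrA_od : ∀ a ∈ odA, rA a ∈ odB)
    (hrL_br : ∀ x y : L, rL (br x y) = rL x * rL y + rL y * rL x)
    (hrL_sq : ∀ x ∈ odL, rL (sq x) = rL x * rL x)
    (hrL_ev : ∀ x ∈ evL, rL x ∈ evB) (hrL_od : ∀ x ∈ odL, rL x ∈ odB)
    (hcomp1 : ∀ (a : A) (x : L), rL (act a x) = rA a * rL x)
    (hcomp2 : ∀ (x : L) (a : A), rL x * rA a = rA a * rL x + rA (ρ x a)) :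
    ∃! f : LREnv K odA odL mulA br sq act ρ →ₐ[K] B,
      (∀ a : A, f (lrIA K odA odL mulA br sq act ρ a) = rA a) ∧
      (∀ x : L, f (lrIL K odA odL mulA br sq act ρ x) = rL x) :=
  lieRinehart_enveloping_universal_property_general evA odA mulA evL odL br sq act ρ hLR B rA rL
    hrA_mul hrL_br hrL_sq hcomp1 hcomp2
end

section
/- Let (P, {-,-}, s) be a Poisson superalgebra over a field K of characteristic 2 and let (P_k[[t]], μ_(k), ω_(k)) be a formal deformation of order k of P, with coefficients (μ_i, ω_i). Define Obs¹_{k+1}(x,y,z) = Σ_{i=1}^k ( μ_i(x, μ_{k+1-i}(y,z)) + μ_i(y, μ_{k+1-i}(z,x)) + μ_i(z, μ_{k+1-i}(x,y)) ) for x,y,z ∈ P, and Obs²_{k+1}(x,y) = Σ_{i=1}^k ( μ_i(y, ω_{k+1-i}(x)) + μ_i(x, μ_{k+1-i}(x,y)) ) for x ∈ P₁ and y ∈ P. Then (Obs¹_{k+1}, Obs²_{k+1}) is an even Poisson 3-cochain of P. -/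
/-- A Poisson superalgebra in characteristic 2: a Lie superalgebra together with an
associative supercommutative product satisfying the Leibniz rule and the compatibility
of the squaring with the product. -/
structure IsPoisson2 (K : Type*) [Field K] {P : Type*} [AddCommGroup P] [Module K P]
    (ev od : Submodule K P) (mul br : P → P → P) (sq : P → P) : Prop where
  commAlg : IsSuperComm2 K ev od mul
  lieAlg : IsLieSuper2 K ev od br sq
  leibniz : ∀ x y z : P, br (mul x y) z = mul x (br y z) + mul (br x z) y
  sq_mul : ∀ x ∈ ev, ∀ y ∈ od,
    sq (mul x y) = mul (mul x x) (sq y) + mul (mul x y) (br x y)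
section DeformationTheory
variable (K : Type*) [Field K] {P : Type*} [AddCommGroup P] [Module K P]

/-- A Poisson 2-cochain `(φ, ω)` of a Poisson superalgebra in characteristic 2,
written in curried form. -/
structure IsPoisson2Cochain2 (ev od : Submodule K P) (mul : P → P → P)
    (φ : P → P → P) (ω : P → P) : Prop where
  φ_add_left : ∀ x y z : P, φ (x + y) z = φ x z + φ y z
  φ_smul_left : ∀ (c : K) (x z : P), φ (c • x) z = c • φ x z
  φ_add_right : ∀ x y z : P, φ x (y + z) = φ x y + φ x z
  φ_smul_right : ∀ (c : K) (x z : P), φ x (c • z) = c • φ x z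
  φ_alt : ∀ x : P, φ x x = 0
  φ_der : ∀ x y z : P, φ (mul x y) z = mul x (φ y z) + mul y (φ x z)
  ω_smul : ∀ (c : K), ∀ x ∈ od, ω (c • x) = (c * c) • ω x
  ω_polar : ∀ x ∈ od, ∀ y ∈ od, ω (x + y) = ω x + ω y + φ x y
  ω_mul : ∀ x ∈ od, ∀ y ∈ ev,
    ω (mul x y) = mul (mul y y) (ω x) + mul (mul x y) (φ x y)

/-- A Poisson 3-cochain `(φ, ω)` of a Poisson superalgebra in characteristic 2,
written in curried form. -/
structure IsPoisson2Cochain3 (ev od : Submodule K P) (mul : P → P → P)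
    (φ : P → P → P → P) (ω : P → P → P) : Prop where
  φ_add1 : ∀ x x' y z : P, φ (x + x') y z = φ x y z + φ x' y z
  φ_smul1 : ∀ (c : K) (x y z : P), φ (c • x) y z = c • φ x y z
  φ_add2 : ∀ x y y' z : P, φ x (y + y') z = φ x y z + φ x y' z
  φ_smul2 : ∀ (c : K) (x y z : P), φ x (c • y) z = c • φ x y z
  φ_add3 : ∀ x y z z' : P, φ x y (z + z') = φ x y z + φ x y z'
  φ_smul3 : ∀ (c : K) (x y z : P), φ x y (c • z) = c • φ x y z
  φ_alt12 : ∀ x z : P, φ x x z = 0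
  φ_alt23 : ∀ x y : P, φ x y y = 0
  φ_alt13 : ∀ x y : P, φ x y x = 0
  φ_der : ∀ x y z w : P, φ (mul x y) z w = mul x (φ y z w) + mul y (φ x z w)
  ω_smul : ∀ (c : K), ∀ x ∈ od, ∀ z : P, ω (c • x) z = (c * c) • ω x z
  ω_polar : ∀ x ∈ od, ∀ y ∈ od, ∀ z : P, ω (x + y) z = ω x z + ω y z + φ x y z
  ω_add2 : ∀ x z z' : P, ω x (z + z') = ω x z + ω x z'
  ω_smul2 : ∀ (x : P) (c : K) (z : P), ω x (c • z) = c • ω x z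
  ω_mul : ∀ x ∈ od, ∀ y ∈ ev, ∀ z : P,
    ω (mul x y) z = mul (mul y y) (ω x z) + mul (mul x y) (φ x y z)
  ω_der2 : ∀ x z z' : P, ω x (mul z z') = mul z (ω x z') + mul z' (ω x z)

/-- `pt ev od false = ev` and `pt ev od true = od`: the homogeneous component of a
given parity. -/
def pt (ev od : Submodule K P) : Bool → Submodule K P := fun b => bif b then od else ev

/-- A Poisson 2-cochain is even if `φ` preserves the grading (then `ω` takes odd
elements to even ones). -/
def Cochain2Even (ev od : Submodule K P) (φ : P → P → P) (ω : P → P) : Prop :=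
  (∀ (b1 b2 : Bool), ∀ x ∈ pt K ev od b1, ∀ y ∈ pt K ev od b2,
    φ x y ∈ pt K ev od (xor b1 b2)) ∧
  (∀ x ∈ od, ω x ∈ ev)

/-- A Poisson 3-cochain is even if `φ` preserves the grading. -/
def Cochain3Even (ev od : Submodule K P) (φ : P → P → P → P) (ω : P → P → P) : Prop :=
  (∀ (b1 b2 b3 : Bool), ∀ x ∈ pt K ev od b1, ∀ y ∈ pt K ev od b2, ∀ z ∈ pt K ev od b3,
    φ x y z ∈ pt K ev od (xor b1 (xor b2 b3))) ∧
  (∀ (b : Bool), ∀ x ∈ od, ∀ z ∈ pt K ev od b, ω x z ∈ pt K ev od b)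

end DeformationTheory

section Truncations
variable {P : Type*} [AddCommGroup P]

/-- The product of `P_k[[t]] = P[[t]]/(t^{k+1})`, realized on coefficient tuples
`Fin (k+1) → P` by convolution. -/
def truncMul (mul : P → P → P) (k : ℕ) (f g : Fin (k + 1) → P) : Fin (k + 1) → P :=
  fun r => ∑ i : Fin (k + 1), ∑ j : Fin (k + 1),
    if (i : ℕ) + (j : ℕ) = (r : ℕ) then mul (f i) (g j) else 0

/-- The deformed bracket `μ_t = Σ tᵃ μ_a` (with `μ_0` the original bracket) on
coefficient tuples. -/
def truncBr (μ : ℕ → P → P → P) (k : ℕ) (f g : Fin (k + 1) → P) : Fin (k + 1) → P :=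
  fun r => ∑ a ∈ Finset.range (k + 1), ∑ i : Fin (k + 1), ∑ j : Fin (k + 1),
    if a + (i : ℕ) + (j : ℕ) = (r : ℕ) then μ a (f i) (g j) else 0

/-- The deformed squaring `ω_t = Σ tᵃ ω_a` (with `ω_0` the original squaring) on
coefficient tuples; quadratic terms use the polar forms `μ_a`. -/
def truncSq (μ : ℕ → P → P → P) (ωs : ℕ → P → P) (k : ℕ) (f : Fin (k + 1) → P) :
    Fin (k + 1) → P :=
  fun r =>
    (∑ a ∈ Finset.range (k + 1), ∑ b : Fin (k + 1),
      if a + 2 * (b : ℕ) = (r : ℕ) then ωs a (f b) else 0) +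
    ∑ a ∈ Finset.range (k + 1), ∑ b : Fin (k + 1), ∑ c : Fin (k + 1),
      if a + (b : ℕ) + (c : ℕ) = (r : ℕ) ∧ (b : ℕ) < (c : ℕ) then μ a (f b) (f c) else 0

end Truncations

section DeformationTheory2
variable (K : Type*) [Field K] {P : Type*} [AddCommGroup P] [Module K P]

/-- A formal deformation of order `k` of the Poisson superalgebra
`(P, mul, br, sq)`: coefficient maps `μ_i, ω_i` for `1 ≤ i ≤ k` which are even
Poisson 2-cochains, extending `μ_0 = br`, `ω_0 = sq`, such that the truncated
structure is a Poisson superalgebra on `P[[t]]/(t^{k+1})` in characteristic 2. -/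
def IsDeformation (ev od : Submodule K P) (mul br : P → P → P) (sq : P → P)
    (k : ℕ) (μ : ℕ → P → P → P) (ωs : ℕ → P → P) : Prop :=
  μ 0 = br ∧ ωs 0 = sq ∧
  (∀ i, 1 ≤ i → i ≤ k →
    IsPoisson2Cochain2 K ev od mul (μ i) (ωs i) ∧ Cochain2Even K ev od (μ i) (ωs i)) ∧
  IsPoisson2 K
    (Submodule.pi Set.univ fun _ : Fin (k + 1) => ev)
    (Submodule.pi Set.univ fun _ : Fin (k + 1) => od)
    (truncMul mul k) (truncBr μ k) (truncSq μ ωs k)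

end DeformationTheory2

open Finset

theorem add_self_eq_zero_of_charP_two (K : Type*) {P : Type*} [Field K] [CharP K 2]
    [AddCommGroup P] [Module K P] (p : P) : p + p = 0 := by
  rw [← two_smul K p, CharTwo.two_eq_zero, zero_smul]

theorem Finset.sub_mem_Icc_one {i k : ℕ} (hi : i ∈ Icc 1 k) : k + 1 - i ∈ Icc 1 k := by
  rw [mem_Icc] at hi ⊢
  omega

theorem Finset.sum_Icc_one_reflect {M : Type*} [AddCommMonoid M] (f : ℕ → M) (k : ℕ) :
    ∑ i ∈ Icc 1 k, f (k + 1 - i) = ∑ i ∈ Icc 1 k, f i := by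
  refine sum_nbij' (k + 1 - ·) (k + 1 - ·) ?_ ?_ ?_ ?_ ?_ <;> intro i hi <;>
    simp only [mem_Icc] at hi ⊢ <;> omega

theorem Finset.sum_Icc_one_eq_of_add_swap {M : Type*} [AddCommGroup M]
    (h2 : ∀ p : M, p + p = 0) {k : ℕ} {F G : ℕ → M} (a : ℕ → ℕ → M)
    (h : ∀ i ∈ Icc 1 k, F i = G i + (a i (k + 1 - i) + a (k + 1 - i) i)) :
    ∑ i ∈ Icc 1 k, F i = ∑ i ∈ Icc 1 k, G i := by
  have swap : ∑ i ∈ Icc 1 k, a (k + 1 - i) i = ∑ i ∈ Icc 1 k, a i (k + 1 - i) := by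
    rw [← sum_Icc_one_reflect]
    refine sum_congr rfl fun i hi => ?_
    rw [mem_Icc] at hi
    congr 1
    omega
  rw [sum_congr rfl h, sum_add_distrib, sum_add_distrib, swap, h2, add_zero]

section
variable {K P : Type*} [Field K] [AddCommGroup P] [Module K P] {ev od : Submodule K P}
  {mul : P → P → P}

namespace IsSuperComm2

theorem zero_mul (A : IsSuperComm2 K ev od mul) (a : P) : mul 0 a = 0 := by
  simpa using A.smul_left 0 0 a

theorem mul_zero (A : IsSuperComm2 K ev od mul) (a : P) : mul a 0 = 0 := by
  rw [A.comm, A.zero_mul]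

theorem mul_add (A : IsSuperComm2 K ev od mul) (a b c : P) :
    mul a (b + c) = mul a b + mul a c := by
  rw [A.comm, A.add_left, A.comm b, A.comm c]

theorem mul_left_comm (A : IsSuperComm2 K ev od mul) (a b c : P) :
    mul a (mul b c) = mul b (mul a c) := by
  rw [← A.assoc, A.comm a b, A.assoc]

theorem mul_sum (A : IsSuperComm2 K ev od mul) {ι : Type*} (a : P) (s : Finset ι)
    (f : ι → P) :
    mul a (∑ i ∈ s, f i) = ∑ i ∈ s, mul a (f i) :=
  map_sum (AddMonoidHom.mk' (mul a) (A.mul_add a)) f s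

theorem mul_mul_self_of_mem_od (A : IsSuperComm2 K ev od mul) {a : P} (ha : a ∈ od) (b : P) :
    mul a (mul a b) = 0 := by
  rw [← A.assoc, A.alt_od a ha, A.zero_mul]

end IsSuperComm2

namespace IsPoisson2Cochain2

variable {φ : P → P → P} {ω : P → P}

theorem zero_right (h : IsPoisson2Cochain2 K ev od mul φ ω) (x : P) : φ x 0 = 0 := by
  simpa using h.φ_smul_right 0 x 0

theorem symm [CharP K 2] (h : IsPoisson2Cochain2 K ev od mul φ ω) (x y : P) :
    φ x y = φ y x := by
  have hxy := h.φ_alt (x + y)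
  rw [h.φ_add_left, h.φ_add_right, h.φ_add_right, h.φ_alt, h.φ_alt, zero_add, add_zero] at hxy
  rw [add_eq_zero_iff_eq_neg.mp hxy, neg_eq_iff_add_eq_zero, add_self_eq_zero_of_charP_two K]

theorem der_right [CharP K 2] (h : IsPoisson2Cochain2 K ev od mul φ ω) (x y z : P) :
    φ z (mul x y) = mul x (φ z y) + mul y (φ z x) := by
  rw [h.symm, h.φ_der, h.symm y, h.symm x]

end IsPoisson2Cochain2


def cochainComp (φ ψ : P → P → P) : P → P → P → P :=
  fun x y z => φ x (ψ y z) + φ y (ψ z x) + φ z (ψ x y)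

def cochainSqComp (φ ψ : P → P → P) (η : P → P) : P → P → P :=
  fun x z => φ z (η x) + φ x (ψ x z)

variable {φ ψ : P → P → P} {ω η : P → P}

theorem cochainComp_rotate (x y z : P) : cochainComp φ ψ x y z = cochainComp φ ψ y z x := by
  simp only [cochainComp]
  abel

theorem cochainComp_add_left (hφ : IsPoisson2Cochain2 K ev od mul φ ω)
    (hψ : IsPoisson2Cochain2 K ev od mul ψ η) (x x' y z : P) :
    cochainComp φ ψ (x + x') y z = cochainComp φ ψ x y z + cochainComp φ ψ x' y z := by
  simp only [cochainComp, hφ.φ_add_left, hφ.φ_add_right, hψ.φ_add_left, hψ.φ_add_right]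
  abel

theorem cochainComp_smul_left (hφ : IsPoisson2Cochain2 K ev od mul φ ω)
    (hψ : IsPoisson2Cochain2 K ev od mul ψ η) (c : K) (x y z : P) :
    cochainComp φ ψ (c • x) y z = c • cochainComp φ ψ x y z := by
  simp only [cochainComp, hφ.φ_smul_left, hφ.φ_smul_right, hψ.φ_smul_left, hψ.φ_smul_right,
    smul_add]

theorem cochainComp_self_left [CharP K 2] (hφ : IsPoisson2Cochain2 K ev od mul φ ω)
    (hψ : IsPoisson2Cochain2 K ev od mul ψ η) (x z : P) : cochainComp φ ψ x x z = 0 := by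
  rw [cochainComp, hψ.φ_alt, hφ.zero_right, add_zero, hψ.symm z x,
    add_self_eq_zero_of_charP_two K]

theorem cochainComp_mul_left [CharP K 2] (A : IsSuperComm2 K ev od mul)
    (hφ : IsPoisson2Cochain2 K ev od mul φ ω) (hψ : IsPoisson2Cochain2 K ev od mul ψ η)
    (x y z w : P) :
    cochainComp φ ψ (mul x y) z w =
      mul x (cochainComp φ ψ y z w) + mul y (cochainComp φ ψ x z w) +
        ((mul (ψ w y) (φ z x) + mul (ψ w x) (φ z y)) +
          (mul (φ w y) (ψ z x) + mul (φ w x) (ψ z y))) := by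
  simp only [cochainComp, hφ.φ_der, hφ.der_right, hψ.φ_der, hψ.der_right, hφ.φ_add_right,
    A.mul_add]
  rw [A.comm (ψ y z), A.comm (ψ x z), hψ.symm y z, hψ.symm x z]
  abel

theorem cochainSqComp_smul_left (hφ : IsPoisson2Cochain2 K ev od mul φ ω)
    (hψ : IsPoisson2Cochain2 K ev od mul ψ η) (c : K) {x : P} (hx : x ∈ od) (z : P) :
    cochainSqComp φ ψ η (c • x) z = (c * c) • cochainSqComp φ ψ η x z := by
  simp only [cochainSqComp, hψ.ω_smul c x hx, hφ.φ_smul_left, hφ.φ_smul_right, hψ.φ_smul_left,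
    smul_add, smul_smul]

theorem cochainSqComp_polar [CharP K 2] (hφ : IsPoisson2Cochain2 K ev od mul φ ω)
    (hψ : IsPoisson2Cochain2 K ev od mul ψ η) {x y : P} (hx : x ∈ od) (hy : y ∈ od) (z : P) :
    cochainSqComp φ ψ η (x + y) z =
      cochainSqComp φ ψ η x z + cochainSqComp φ ψ η y z + cochainComp φ ψ x y z := by
  simp only [cochainSqComp, cochainComp, hψ.ω_polar x hx y hy, hφ.φ_add_left, hφ.φ_add_right,
    hψ.φ_add_left, hψ.symm z x]
  abel

theorem cochainSqComp_add_right (hφ : IsPoisson2Cochain2 K ev od mul φ ω)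
    (hψ : IsPoisson2Cochain2 K ev od mul ψ η) (x z z' : P) :
    cochainSqComp φ ψ η x (z + z') = cochainSqComp φ ψ η x z + cochainSqComp φ ψ η x z' := by
  simp only [cochainSqComp, hφ.φ_add_left, hφ.φ_add_right, hψ.φ_add_right]
  abel

theorem cochainSqComp_smul_right (hφ : IsPoisson2Cochain2 K ev od mul φ ω)
    (hψ : IsPoisson2Cochain2 K ev od mul ψ η) (x : P) (c : K) (z : P) :
    cochainSqComp φ ψ η x (c • z) = c • cochainSqComp φ ψ η x z := by
  simp only [cochainSqComp, hφ.φ_smul_left, hφ.φ_smul_right, hψ.φ_smul_right, smul_add]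

theorem cochainSqComp_mul_left [CharP K 2] (A : IsSuperComm2 K ev od mul)
    (hφ : IsPoisson2Cochain2 K ev od mul φ ω) (hψ : IsPoisson2Cochain2 K ev od mul ψ η)
    {x y : P} (hx : x ∈ od) (hy : y ∈ ev) (z : P) :
    cochainSqComp φ ψ η (mul x y) z =
      mul (mul y y) (cochainSqComp φ ψ η x z) + mul (mul x y) (cochainComp φ ψ x y z) +
        ((mul x (mul (ψ y z) (φ x y)) + mul y (mul (ψ x z) (φ x y))) +
          (mul x (mul (φ y z) (ψ x y)) + mul y (mul (φ x z) (ψ x y)))) := by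
  simp only [cochainSqComp, cochainComp, hψ.ω_mul x hx y hy, hφ.φ_add_right, hφ.φ_der,
    hφ.der_right, hψ.φ_der, hφ.φ_alt, A.mul_add, A.mul_zero, A.mul_mul_self_of_mem_od hx,
    add_self_eq_zero_of_charP_two K, add_zero, zero_add]
  simp only [A.assoc, A.comm, A.mul_left_comm, hφ.symm, hψ.symm]
  abel

theorem cochainSqComp_mul_right [CharP K 2] (A : IsSuperComm2 K ev od mul)
    (hφ : IsPoisson2Cochain2 K ev od mul φ ω) (hψ : IsPoisson2Cochain2 K ev od mul ψ η)
    (x z z' : P) :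
    cochainSqComp φ ψ η x (mul z z') =
      mul z (cochainSqComp φ ψ η x z') + mul z' (cochainSqComp φ ψ η x z) +
        (mul (ψ z' x) (φ z x) + mul (φ z' x) (ψ z x)) := by
  simp only [cochainSqComp, hφ.φ_der, hφ.der_right, hψ.der_right, hφ.φ_add_right, A.mul_add]
  simp only [A.comm, hφ.symm, hψ.symm]
  abel

theorem cochainComp_mem_pt (hφ : Cochain2Even K ev od φ ω) (hψ : Cochain2Even K ev od ψ η)
    {b₁ b₂ b₃ : Bool} {x y z : P} (hx : x ∈ pt K ev od b₁) (hy : y ∈ pt K ev od b₂)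
    (hz : z ∈ pt K ev od b₃) : cochainComp φ ψ x y z ∈ pt K ev od (xor b₁ (xor b₂ b₃)) := by
  have h₁ := hφ.1 _ _ x hx _ (hψ.1 _ _ y hy z hz)
  have h₂ := hφ.1 _ _ y hy _ (hψ.1 _ _ z hz x hx)
  have h₃ := hφ.1 _ _ z hz _ (hψ.1 _ _ x hx y hy)
  rw [show xor b₂ (xor b₃ b₁) = xor b₁ (xor b₂ b₃) by
    cases b₁ <;> cases b₂ <;> cases b₃ <;> rfl] at h₂
  rw [show xor b₃ (xor b₁ b₂) = xor b₁ (xor b₂ b₃) by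
    cases b₁ <;> cases b₂ <;> cases b₃ <;> rfl] at h₃
  exact add_mem (add_mem h₁ h₂) h₃

theorem cochainSqComp_mem_pt (hφ : Cochain2Even K ev od φ ω) (hψ : Cochain2Even K ev od ψ η)
    {b : Bool} {x z : P} (hx : x ∈ od) (hz : z ∈ pt K ev od b) :
    cochainSqComp φ ψ η x z ∈ pt K ev od b := by
  have h₁ := hφ.1 b false z hz _ (hψ.2 x hx)
  have h₂ := hφ.1 true _ x hx _ (hψ.1 true b x hx z hz)
  rw [Bool.xor_false] at h₁
  rw [← Bool.xor_assoc, Bool.xor_self, Bool.false_xor] at h₂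
  exact add_mem h₁ h₂

variable {μ : ℕ → P → P → P} {ωs : ℕ → P → P} {k : ℕ}

-- `Obs¹_{k+1}` and `Obs²_{k+1}`
def obstructionJacobi (μ : ℕ → P → P → P) (k : ℕ) (x y z : P) : P :=
  ∑ i ∈ Icc 1 k, cochainComp (μ i) (μ (k + 1 - i)) x y z

def obstructionSq (μ : ℕ → P → P → P) (ωs : ℕ → P → P) (k : ℕ) (x z : P) : P :=
  ∑ i ∈ Icc 1 k, cochainSqComp (μ i) (μ (k + 1 - i)) (ωs (k + 1 - i)) x z

theorem obstructionJacobi_rotate (x y z : P) :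
    obstructionJacobi μ k x y z = obstructionJacobi μ k y z x :=
  sum_congr rfl fun _ _ => cochainComp_rotate x y z

theorem obstructionJacobi_add_left
    (hμ : ∀ i ∈ Icc 1 k, IsPoisson2Cochain2 K ev od mul (μ i) (ωs i)) (x x' y z : P) :
    obstructionJacobi μ k (x + x') y z =
      obstructionJacobi μ k x y z + obstructionJacobi μ k x' y z := by
  simp only [obstructionJacobi, ← sum_add_distrib]
  exact sum_congr rfl fun i hi =>
    cochainComp_add_left (hμ i hi) (hμ _ (sub_mem_Icc_one hi)) x x' y z

theorem obstructionJacobi_smul_left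
    (hμ : ∀ i ∈ Icc 1 k, IsPoisson2Cochain2 K ev od mul (μ i) (ωs i)) (c : K) (x y z : P) :
    obstructionJacobi μ k (c • x) y z = c • obstructionJacobi μ k x y z := by
  simp only [obstructionJacobi, smul_sum]
  exact sum_congr rfl fun i hi =>
    cochainComp_smul_left (hμ i hi) (hμ _ (sub_mem_Icc_one hi)) c x y z

theorem obstructionJacobi_self_left [CharP K 2]
    (hμ : ∀ i ∈ Icc 1 k, IsPoisson2Cochain2 K ev od mul (μ i) (ωs i)) (x z : P) :
    obstructionJacobi μ k x x z = 0 :=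
  sum_eq_zero fun i hi => cochainComp_self_left (hμ i hi) (hμ _ (sub_mem_Icc_one hi)) x z

theorem obstructionJacobi_mul_left [CharP K 2] (A : IsSuperComm2 K ev od mul)
    (hμ : ∀ i ∈ Icc 1 k, IsPoisson2Cochain2 K ev od mul (μ i) (ωs i)) (x y z w : P) :
    obstructionJacobi μ k (mul x y) z w =
      mul x (obstructionJacobi μ k y z w) + mul y (obstructionJacobi μ k x z w) := by
  simp only [obstructionJacobi, A.mul_sum, ← sum_add_distrib]
  exact sum_Icc_one_eq_of_add_swap (add_self_eq_zero_of_charP_two K)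
    (fun i j => mul (μ j w y) (μ i z x) + mul (μ j w x) (μ i z y)) fun i hi =>
      cochainComp_mul_left A (hμ i hi) (hμ _ (sub_mem_Icc_one hi)) x y z w

theorem obstructionSq_smul_left
    (hμ : ∀ i ∈ Icc 1 k, IsPoisson2Cochain2 K ev od mul (μ i) (ωs i)) (c : K) {x : P}
    (hx : x ∈ od) (z : P) :
    obstructionSq μ ωs k (c • x) z = (c * c) • obstructionSq μ ωs k x z := by
  simp only [obstructionSq, smul_sum]
  exact sum_congr rfl fun i hi =>
    cochainSqComp_smul_left (hμ i hi) (hμ _ (sub_mem_Icc_one hi)) c hx z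

theorem obstructionSq_polar [CharP K 2]
    (hμ : ∀ i ∈ Icc 1 k, IsPoisson2Cochain2 K ev od mul (μ i) (ωs i)) {x y : P}
    (hx : x ∈ od) (hy : y ∈ od) (z : P) :
    obstructionSq μ ωs k (x + y) z =
      obstructionSq μ ωs k x z + obstructionSq μ ωs k y z + obstructionJacobi μ k x y z := by
  simp only [obstructionSq, obstructionJacobi, ← sum_add_distrib]
  exact sum_congr rfl fun i hi =>
    cochainSqComp_polar (hμ i hi) (hμ _ (sub_mem_Icc_one hi)) hx hy z

theorem obstructionSq_add_right
    (hμ : ∀ i ∈ Icc 1 k, IsPoisson2Cochain2 K ev od mul (μ i) (ωs i)) (x z z' : P) :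
    obstructionSq μ ωs k x (z + z') = obstructionSq μ ωs k x z + obstructionSq μ ωs k x z' := by
  simp only [obstructionSq, ← sum_add_distrib]
  exact sum_congr rfl fun i hi =>
    cochainSqComp_add_right (hμ i hi) (hμ _ (sub_mem_Icc_one hi)) x z z'

theorem obstructionSq_smul_right
    (hμ : ∀ i ∈ Icc 1 k, IsPoisson2Cochain2 K ev od mul (μ i) (ωs i)) (x : P) (c : K) (z : P) :
    obstructionSq μ ωs k x (c • z) = c • obstructionSq μ ωs k x z := by
  simp only [obstructionSq, smul_sum]
  exact sum_congr rfl fun i hi =>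
    cochainSqComp_smul_right (hμ i hi) (hμ _ (sub_mem_Icc_one hi)) x c z

theorem obstructionSq_mul_left [CharP K 2] (A : IsSuperComm2 K ev od mul)
    (hμ : ∀ i ∈ Icc 1 k, IsPoisson2Cochain2 K ev od mul (μ i) (ωs i)) {x y : P}
    (hx : x ∈ od) (hy : y ∈ ev) (z : P) :
    obstructionSq μ ωs k (mul x y) z =
      mul (mul y y) (obstructionSq μ ωs k x z) + mul (mul x y) (obstructionJacobi μ k x y z) := by
  simp only [obstructionSq, obstructionJacobi, A.mul_sum, ← sum_add_distrib]
  exact sum_Icc_one_eq_of_add_swap (add_self_eq_zero_of_charP_two K)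
    (fun i j => mul x (mul (μ j y z) (μ i x y)) + mul y (mul (μ j x z) (μ i x y))) fun i hi =>
      cochainSqComp_mul_left A (hμ i hi) (hμ _ (sub_mem_Icc_one hi)) hx hy z

theorem obstructionSq_mul_right [CharP K 2] (A : IsSuperComm2 K ev od mul)
    (hμ : ∀ i ∈ Icc 1 k, IsPoisson2Cochain2 K ev od mul (μ i) (ωs i)) (x z z' : P) :
    obstructionSq μ ωs k x (mul z z') =
      mul z (obstructionSq μ ωs k x z') + mul z' (obstructionSq μ ωs k x z) := by
  simp only [obstructionSq, A.mul_sum, ← sum_add_distrib]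
  exact sum_Icc_one_eq_of_add_swap (add_self_eq_zero_of_charP_two K)
    (fun i j => mul (μ j z' x) (μ i z x)) fun i hi =>
      cochainSqComp_mul_right A (hμ i hi) (hμ _ (sub_mem_Icc_one hi)) x z z'

theorem isPoisson2Cochain3_obstruction [CharP K 2] (A : IsSuperComm2 K ev od mul)
    (hμ : ∀ i ∈ Icc 1 k, IsPoisson2Cochain2 K ev od mul (μ i) (ωs i)) :
    IsPoisson2Cochain3 K ev od mul (obstructionJacobi μ k) (obstructionSq μ ωs k) where
  φ_add1 := obstructionJacobi_add_left hμ
  φ_smul1 := obstructionJacobi_smul_left hμ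
  φ_add2 x y y' z := by
    rw [obstructionJacobi_rotate x, obstructionJacobi_add_left hμ,
      ← obstructionJacobi_rotate x y, ← obstructionJacobi_rotate x y']
  φ_smul2 c x y z := by
    rw [obstructionJacobi_rotate x, obstructionJacobi_smul_left hμ, ← obstructionJacobi_rotate x]
  φ_add3 x y z z' := by
    rw [← obstructionJacobi_rotate (z + z'), obstructionJacobi_add_left hμ,
      obstructionJacobi_rotate z, obstructionJacobi_rotate z']
  φ_smul3 c x y z := by
    rw [← obstructionJacobi_rotate (c • z), obstructionJacobi_smul_left hμ,
      obstructionJacobi_rotate z]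
  φ_alt12 := obstructionJacobi_self_left hμ
  φ_alt23 x y := by rw [obstructionJacobi_rotate, obstructionJacobi_self_left hμ]
  φ_alt13 x y := by rw [← obstructionJacobi_rotate, obstructionJacobi_self_left hμ]
  φ_der := obstructionJacobi_mul_left A hμ
  ω_smul c x hx := obstructionSq_smul_left hμ c hx
  ω_polar x hx y hy := obstructionSq_polar hμ hx hy
  ω_add2 := obstructionSq_add_right hμ
  ω_smul2 := obstructionSq_smul_right hμ
  ω_mul x hx y hy := obstructionSq_mul_left A hμ hx hy
  ω_der2 := obstructionSq_mul_right A hμ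

theorem cochain3Even_obstruction (hμ : ∀ i ∈ Icc 1 k, Cochain2Even K ev od (μ i) (ωs i)) :
    Cochain3Even K ev od (obstructionJacobi μ k) (obstructionSq μ ωs k) :=
  ⟨fun _ _ _ _ hx _ hy _ hz => sum_mem fun i hi =>
      cochainComp_mem_pt (hμ i hi) (hμ _ (sub_mem_Icc_one hi)) hx hy hz,
    fun _ _ hx _ hz => sum_mem fun i hi =>
      cochainSqComp_mem_pt (hμ i hi) (hμ _ (sub_mem_Icc_one hi)) hx hz⟩

end

theorem obstruction_is_even_3cochain_general
    {K P : Type*} [Field K] [CharP K 2] [AddCommGroup P] [Module K P]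
    (ev od : Submodule K P) (mul br : P → P → P) (sq : P → P)
    (hP : IsPoisson2 K ev od mul br sq)
    (k : ℕ) (μ : ℕ → P → P → P) (ωs : ℕ → P → P)
    (hdef : IsDeformation K ev od mul br sq k μ ωs) :
    IsPoisson2Cochain3 K ev od mul
      (fun x y z => ∑ i ∈ Finset.Icc 1 k,
        (μ i x (μ (k + 1 - i) y z) + μ i y (μ (k + 1 - i) z x) +
          μ i z (μ (k + 1 - i) x y)))
      (fun x y => ∑ i ∈ Finset.Icc 1 k,
        (μ i y (ωs (k + 1 - i) x) + μ i x (μ (k + 1 - i) x y))) ∧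
    Cochain3Even K ev od
      (fun x y z => ∑ i ∈ Finset.Icc 1 k,
        (μ i x (μ (k + 1 - i) y z) + μ i y (μ (k + 1 - i) z x) +
          μ i z (μ (k + 1 - i) x y)))
      (fun x y => ∑ i ∈ Finset.Icc 1 k,
        (μ i y (ωs (k + 1 - i) x) + μ i x (μ (k + 1 - i) x y))) := by
  obtain ⟨-, -, hμ, -⟩ := hdef
  have hμIcc (i : ℕ) (hi : i ∈ Icc 1 k) := hμ i (mem_Icc.mp hi).1 (mem_Icc.mp hi).2
  exact ⟨isPoisson2Cochain3_obstruction hP.commAlg fun i hi => (hμIcc i hi).1,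
    cochain3Even_obstruction fun i hi => (hμIcc i hi).2⟩

/-- For a formal deformation of order `k` of a Poisson superalgebra
`P` in characteristic 2, the obstruction pair `(Obs¹_{k+1}, Obs²_{k+1})` is an even
Poisson 3-cochain of `P`. -/
theorem obstruction_is_even_3cochain
    {K P : Type*} [Field K] [CharP K 2] [AddCommGroup P] [Module K P]
    (ev od : Submodule K P) (mul br : P → P → P) (sq : P → P)
    (hP : IsPoisson2 K ev od mul br sq)
    (k : ℕ) (hk : 1 ≤ k) (μ : ℕ → P → P → P) (ωs : ℕ → P → P)
    (hdef : IsDeformation K ev od mul br sq k μ ωs) :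
    IsPoisson2Cochain3 K ev od mul
      (fun x y z => ∑ i ∈ Finset.Icc 1 k,
        (μ i x (μ (k + 1 - i) y z) + μ i y (μ (k + 1 - i) z x) +
          μ i z (μ (k + 1 - i) x y)))
      (fun x y => ∑ i ∈ Finset.Icc 1 k,
        (μ i y (ωs (k + 1 - i) x) + μ i x (μ (k + 1 - i) x y))) ∧
    Cochain3Even K ev od
      (fun x y z => ∑ i ∈ Finset.Icc 1 k,
        (μ i x (μ (k + 1 - i) y z) + μ i y (μ (k + 1 - i) z x) +
          μ i z (μ (k + 1 - i) x y)))
      (fun x y => ∑ i ∈ Finset.Icc 1 k,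
        (μ i y (ωs (k + 1 - i) x) + μ i x (μ (k + 1 - i) x y))) :=
  obstruction_is_even_3cochain_general ev od mul br sq hP k μ ωs hdef
end

section
/- Let (P, {-,-}, s) be a Poisson superalgebra over a field K of characteristic 2, let k ≥ 1, and let (P_k[[t]], μ_(k), ω_(k)) and (P_k[[t]], μ′_(k), ω′_(k)) be two formal deformations of order k of P which are equivalent via an isomorphism of Poisson superalgebras ψ_t = id + Σ_{i≥1} tⁱψ_i. Then ψ₁ is a derivation of the associative product of P (ψ₁(xy) = ψ₁(x)y + xψ₁(y)), and the first-order terms satisfy (μ₁, ω₁) = (μ₁′, ω₁′) + d¹_po ψ₁; consequently (μ₁, ω₁) and (μ₁′, ω₁′) define the same class in the even part of the second Poisson cohomology group XH²_po(P)₀. -/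
/-- The map `ψ_t = Σ tⁱ ψ_i` on coefficient tuples. -/
def truncMap {P : Type*} [AddCommGroup P]
    (ψ : ℕ → P → P) (k : ℕ) (f : Fin (k + 1) → P) : Fin (k + 1) → P :=
  fun r => ∑ i : Fin (k + 1), ∑ j : Fin (k + 1),
    if (i : ℕ) + (j : ℕ) = (r : ℕ) then ψ (i : ℕ) (f j) else 0

/-!
Apply the three identities `ψ_t ∘ m_t = m'_t ∘ (ψ_t × ψ_t)` to constant series `x, y ∈ P` and
compare coefficients of `t`. Since `ψ_t x = x + t ψ₁ x + O(t²)`, this gives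
`ψ₁(xy) = ψ₁(x) y + x ψ₁(y)`, `μ₁(x, y) + ψ₁{x, y} = μ₁'(x, y) + {ψ₁ x, y} + {x, ψ₁ y}` and
`ω₁(x) + ψ₁(s x) = ω₁'(x) + {x, ψ₁ x}`; in characteristic 2 the last two are the claimed
identities.
-/

section Convolution

variable {M : Type*} [AddCommMonoid M] {k : ℕ} {r : Fin (k + 1)}

lemma sum_sum_ite_val_add_eq_zero (F : Fin (k + 1) → Fin (k + 1) → M) :
    (∑ i : Fin (k + 1), ∑ j : Fin (k + 1), if (i : ℕ) + j = 0 then F i j else 0) = F 0 0 := by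
  simp [Fin.val_eq_zero_iff, ite_and]

lemma sum_sum_ite_val_add_eq_one (F : Fin (k + 1) → Fin (k + 1) → M) (hr : (r : ℕ) = 1) :
    (∑ i : Fin (k + 1), ∑ j : Fin (k + 1), if (i : ℕ) + j = 1 then F i j else 0) =
      F 0 r + F r 0 := by
  have h0r : (0 : Fin (k + 1)) ≠ r := by simp [Fin.ext_iff, hr]
  rw [Fintype.sum_eq_add 0 r h0r]
  · congr 1
    · simp [← hr, Fin.val_inj]
    · simp [hr, Fin.val_eq_zero_iff]
  · rintro i ⟨hi0, hir⟩
    refine Finset.sum_eq_zero fun j _ => if_neg ?_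
    rw [Ne, Fin.ext_iff, Fin.val_zero] at hi0
    rw [Ne, Fin.ext_iff, hr] at hir
    omega

end Convolution

section Coefficients

variable {P : Type*} [AddCommGroup P] {k : ℕ} {r : Fin (k + 1)}

lemma truncMul_apply_zero (mul : P → P → P) (f g : Fin (k + 1) → P) :
    truncMul mul k f g 0 = mul (f 0) (g 0) := by
  simp only [truncMul, Fin.val_zero]
  exact sum_sum_ite_val_add_eq_zero _

lemma truncMul_apply_of_val_eq_one (mul : P → P → P) (f g : Fin (k + 1) → P)
    (hr : (r : ℕ) = 1) :
    truncMul mul k f g r = mul (f 0) (g r) + mul (f r) (g 0) := by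
  simp only [truncMul, hr]
  exact sum_sum_ite_val_add_eq_one _ hr

lemma truncMap_apply_zero (ψ : ℕ → P → P) (f : Fin (k + 1) → P) :
    truncMap ψ k f 0 = ψ 0 (f 0) := by
  simp only [truncMap, Fin.val_zero]
  exact sum_sum_ite_val_add_eq_zero _

lemma truncMap_apply_of_val_eq_one (ψ : ℕ → P → P) (f : Fin (k + 1) → P)
    (hr : (r : ℕ) = 1) :
    truncMap ψ k f r = ψ 0 (f r) + ψ 1 (f 0) := by
  simp only [truncMap, hr]
  simpa [hr] using sum_sum_ite_val_add_eq_one (fun i j => ψ i (f j)) hr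

lemma truncBr_apply_zero (μ : ℕ → P → P → P) (f g : Fin (k + 1) → P) :
    truncBr μ k f g 0 = μ 0 (f 0) (g 0) := by
  simp [truncBr, Fin.val_eq_zero_iff, ite_and]

lemma truncBr_apply_of_val_eq_one (μ : ℕ → P → P → P) (f g : Fin (k + 1) → P)
    (hr : (r : ℕ) = 1) :
    truncBr μ k f g r = μ 0 (f 0) (g r) + μ 0 (f r) (g 0) + μ 1 (f 0) (g 0) := by
  have hk : 1 < k + 1 := by have := r.isLt; omega
  simp only [truncBr, hr]
  rw [Finset.sum_eq_add 0 1 zero_ne_one]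
  · congr 1
    · simpa using sum_sum_ite_val_add_eq_one (fun i j => μ 0 (f i) (g j)) hr
    · simp [add_assoc, Fin.val_eq_zero_iff, ite_and]
  · intro a _ ha
    refine Finset.sum_eq_zero fun i _ => Finset.sum_eq_zero fun j _ => if_neg ?_
    omega
  · simp
  · exact fun h => absurd (Finset.mem_range.mpr hk) h

lemma truncSq_apply_zero (μ : ℕ → P → P → P) (ωs : ℕ → P → P) (f : Fin (k + 1) → P) :
    truncSq μ ωs k f 0 = ωs 0 (f 0) := by
  simp [truncSq, Fin.val_eq_zero_iff, ite_and]

lemma truncSq_apply_of_val_eq_one (μ : ℕ → P → P → P) (ωs : ℕ → P → P)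
    (f : Fin (k + 1) → P) (hr : (r : ℕ) = 1) :
    truncSq μ ωs k f r = ωs 1 (f 0) + μ 0 (f 0) (f r) := by
  have hk : 1 < k + 1 := by have := r.isLt; omega
  simp only [truncSq, hr]
  congr 1
  · rw [Finset.sum_eq_single 1]
    · simp [Fin.val_eq_zero_iff]
    · intro a _ ha
      exact Finset.sum_eq_zero fun b _ => if_neg (by omega)
    · exact fun h => absurd (Finset.mem_range.mpr hk) h
  · rw [Finset.sum_eq_single 0]
    · rw [Fintype.sum_eq_single 0, Fintype.sum_eq_single r]
      · simp [hr]
      · intro c hc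
        refine if_neg fun h => hc (Fin.ext ?_)
        simp only [Fin.val_zero] at h
        omega
      · intro b hb
        refine Finset.sum_eq_zero fun c _ => if_neg fun h => hb (Fin.ext ?_)
        rw [Fin.val_zero]
        omega
    · intro a _ ha
      exact Finset.sum_eq_zero fun b _ => Finset.sum_eq_zero fun c _ => if_neg (by omega)
    · simp

lemma truncMap_single_apply_zero {ψ : ℕ → P → P} (hψ0 : ψ 0 = id) (x : P) :
    truncMap ψ k (Pi.single 0 x) 0 = x := by
  simp [truncMap_apply_zero, hψ0]

lemma truncMap_single_apply_of_val_eq_one {ψ : ℕ → P → P} (hψ0 : ψ 0 = id)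
    (hr : (r : ℕ) = 1) (x : P) :
    truncMap ψ k (Pi.single 0 x) r = ψ 1 x := by
  have hr0 : r ≠ 0 := by simp [Fin.ext_iff, hr]
  simp [truncMap_apply_of_val_eq_one _ _ hr, hψ0, hr0]

end Coefficients

section Vanishing

variable {K P : Type*} [Field K] [AddCommGroup P] [Module K P] {ev od : Submodule K P}

lemma IsSuperComm2.zero_mul_s13 {mul : P → P → P} (hA : IsSuperComm2 K ev od mul) (y : P) :
    mul 0 y = 0 := by
  simpa using hA.add_left 0 0 y

lemma IsSuperComm2.mul_zero_s13 {mul : P → P → P} (hA : IsSuperComm2 K ev od mul) (x : P) :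
    mul x 0 = 0 := by
  rw [hA.comm, hA.zero_mul_s13]

lemma IsLieSuper2.zero_br {br : P → P → P} {sq : P → P} (hL : IsLieSuper2 K ev od br sq)
    (y : P) : br 0 y = 0 := by
  simpa using hL.add_left 0 0 y

lemma IsLieSuper2.br_zero {br : P → P → P} {sq : P → P} (hL : IsLieSuper2 K ev od br sq)
    (x : P) : br x 0 = 0 := by
  rw [hL.symm, hL.zero_br]

end Vanishing

section FirstOrder

variable {K P : Type*} [Field K] [AddCommGroup P] [Module K P] {ev od : Submodule K P}
  {k : ℕ} {ψ : ℕ → P → P}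

lemma leibniz_of_truncMap_mul {mul : P → P → P} (hA : IsSuperComm2 K ev od mul) (hk : 1 ≤ k)
    (hψ0 : ψ 0 = id)
    (hψ_mul : ∀ f g : Fin (k + 1) → P,
      truncMap ψ k (truncMul mul k f g) = truncMul mul k (truncMap ψ k f) (truncMap ψ k g))
    (x y : P) :
    ψ 1 (mul x y) = mul (ψ 1 x) y + mul x (ψ 1 y) := by
  set r : Fin (k + 1) := ⟨1, by omega⟩
  have hr : (r : ℕ) = 1 := rfl
  have h := congrFun (hψ_mul (Pi.single 0 x) (Pi.single 0 y)) r
  rw [truncMap_apply_of_val_eq_one _ _ hr, truncMul_apply_zero,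
    truncMul_apply_of_val_eq_one _ _ _ hr, truncMul_apply_of_val_eq_one _ _ _ hr,
    truncMap_single_apply_zero hψ0, truncMap_single_apply_zero hψ0,
    truncMap_single_apply_of_val_eq_one hψ0 hr, truncMap_single_apply_of_val_eq_one hψ0 hr] at h
  have hr0 : r ≠ 0 := by simp [Fin.ext_iff, hr]
  simp only [hψ0, Pi.single_eq_same, Pi.single_eq_of_ne hr0, hA.mul_zero_s13, hA.zero_mul_s13, id,
    add_zero, zero_add] at h
  rw [h, add_comm]

lemma add_map_br_of_truncMap_br {br : P → P → P} {sq : P → P}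
    (hL : IsLieSuper2 K ev od br sq) (hk : 1 ≤ k) (hψ0 : ψ 0 = id) {μ μ' : ℕ → P → P → P}
    (hμ0 : μ 0 = br) (hμ0' : μ' 0 = br)
    (hψ_br : ∀ f g : Fin (k + 1) → P,
      truncMap ψ k (truncBr μ k f g) = truncBr μ' k (truncMap ψ k f) (truncMap ψ k g))
    (x y : P) :
    μ 1 x y + ψ 1 (br x y) = μ' 1 x y + (br (ψ 1 x) y + br x (ψ 1 y)) := by
  set r : Fin (k + 1) := ⟨1, by omega⟩
  have hr : (r : ℕ) = 1 := rfl
  have h := congrFun (hψ_br (Pi.single 0 x) (Pi.single 0 y)) r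
  rw [truncMap_apply_of_val_eq_one _ _ hr, truncBr_apply_zero,
    truncBr_apply_of_val_eq_one _ _ _ hr, truncBr_apply_of_val_eq_one _ _ _ hr,
    truncMap_single_apply_zero hψ0, truncMap_single_apply_zero hψ0,
    truncMap_single_apply_of_val_eq_one hψ0 hr, truncMap_single_apply_of_val_eq_one hψ0 hr] at h
  have hr0 : r ≠ 0 := by simp [Fin.ext_iff, hr]
  simp only [hψ0, hμ0, hμ0', Pi.single_eq_same, Pi.single_eq_of_ne hr0, hL.br_zero, hL.zero_br,
    id, zero_add] at h
  rw [h]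
  abel

lemma add_map_sq_of_truncMap_sq {br : P → P → P} {sq : P → P}
    (hL : IsLieSuper2 K ev od br sq) (hk : 1 ≤ k) (hψ0 : ψ 0 = id) {μ μ' : ℕ → P → P → P}
    {ωs ωs' : ℕ → P → P} (hμ0 : μ 0 = br) (hμ0' : μ' 0 = br) (hω0 : ωs 0 = sq)
    (hψ_sq : ∀ f ∈ Submodule.pi (Set.univ : Set (Fin (k + 1))) (fun _ => od),
      truncMap ψ k (truncSq μ ωs k f) = truncSq μ' ωs' k (truncMap ψ k f))
    {x : P} (hx : x ∈ od) :
    ωs 1 x + ψ 1 (sq x) = ωs' 1 x + br x (ψ 1 x) := by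
  set r : Fin (k + 1) := ⟨1, by omega⟩
  have hr : (r : ℕ) = 1 := rfl
  have hmem : Pi.single 0 x ∈ Submodule.pi (Set.univ : Set (Fin (k + 1))) (fun _ => od) :=
    Submodule.mem_pi.mpr fun i _ => by
      rcases eq_or_ne i 0 with rfl | hi
      · simpa using hx
      · simp [hi]
  have h := congrFun (hψ_sq _ hmem) r
  rw [truncMap_apply_of_val_eq_one _ _ hr, truncSq_apply_zero,
    truncSq_apply_of_val_eq_one _ _ _ hr, truncSq_apply_of_val_eq_one _ _ _ hr,
    truncMap_single_apply_zero hψ0, truncMap_single_apply_of_val_eq_one hψ0 hr] at h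
  have hr0 : r ≠ 0 := by simp [Fin.ext_iff, hr]
  simpa only [hψ0, hμ0, hμ0', hω0, Pi.single_eq_same, Pi.single_eq_of_ne hr0, hL.br_zero,
    id, add_zero] using h

end FirstOrder

lemma eq_add_of_add_eq_of_charTwo (K : Type*) {P : Type*} [Semiring K] [CharP K 2]
    [AddCommGroup P] [Module K P] {a b c : P} (h : a + c = b) : a = b + c := by
  rw [← h, add_assoc, ← two_smul K c, CharTwo.two_eq_zero, zero_smul, add_zero]

theorem equivalent_deformations_first_order_general
    {K P : Type*} [Field K] [CharP K 2] [AddCommGroup P] [Module K P]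
    (ev od : Submodule K P) (mul br : P → P → P) (sq : P → P)
    (hP : IsPoisson2 K ev od mul br sq)
    (k : ℕ) (hk : 1 ≤ k)
    (μ μ' : ℕ → P → P → P) (ωs ωs' : ℕ → P → P)
    (hdef : IsDeformation K ev od mul br sq k μ ωs)
    (hdef' : IsDeformation K ev od mul br sq k μ' ωs')
    (ψ : ℕ → P → P)
    (hψ0 : ψ 0 = id)
    (hψ_mul : ∀ f g : Fin (k + 1) → P,
      truncMap ψ k (truncMul mul k f g) =
        truncMul mul k (truncMap ψ k f) (truncMap ψ k g))
    (hψ_br : ∀ f g : Fin (k + 1) → P,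
      truncMap ψ k (truncBr μ k f g) =
        truncBr μ' k (truncMap ψ k f) (truncMap ψ k g))
    (hψ_sq : ∀ f ∈ (Submodule.pi (Set.univ : Set (Fin (k + 1))) (fun _ => od)),
      truncMap ψ k (truncSq μ ωs k f) = truncSq μ' ωs' k (truncMap ψ k f)) :
    (∀ x y : P, ψ 1 (mul x y) = mul (ψ 1 x) y + mul x (ψ 1 y)) ∧
    (∀ x y : P,
      μ 1 x y = μ' 1 x y + (br (ψ 1 x) y + br x (ψ 1 y) + ψ 1 (br x y))) ∧
    (∀ x ∈ od, ωs 1 x = ωs' 1 x + (ψ 1 (sq x) + br x (ψ 1 x))) := by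
  obtain ⟨hμ0, hω0, -, -⟩ := hdef
  obtain ⟨hμ0', -, -, -⟩ := hdef'
  refine ⟨leibniz_of_truncMap_mul hP.commAlg hk hψ0 hψ_mul, fun x y => ?_, fun x hx => ?_⟩
  · rw [eq_add_of_add_eq_of_charTwo K
      (add_map_br_of_truncMap_br hP.lieAlg hk hψ0 hμ0 hμ0' hψ_br x y), add_assoc]
  · rw [eq_add_of_add_eq_of_charTwo K
      (add_map_sq_of_truncMap_sq hP.lieAlg hk hψ0 hμ0 hμ0' hω0 hψ_sq hx), add_assoc,
      add_comm (br x _)]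

/-- If two formal deformations of order `k` of a Poisson
superalgebra `P` in characteristic 2 are equivalent via an even isomorphism
`ψ_t = id + Σ_{i≥1} tⁱψ_i`, then `ψ₁` is a derivation of the associative product of
`P` and `(μ₁, ω₁) = (μ₁', ω₁') + d¹_po ψ₁`; hence the two infinitesimal parts are
cohomologous, i.e. they define the same class in `XH²_po(P)₀`. -/
theorem equivalent_deformations_first_order
    {K P : Type*} [Field K] [CharP K 2] [AddCommGroup P] [Module K P]
    (ev od : Submodule K P) (mul br : P → P → P) (sq : P → P)
    (hP : IsPoisson2 K ev od mul br sq)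
    (k : ℕ) (hk : 1 ≤ k)
    (μ μ' : ℕ → P → P → P) (ωs ωs' : ℕ → P → P)
    (hdef : IsDeformation K ev od mul br sq k μ ωs)
    (hdef' : IsDeformation K ev od mul br sq k μ' ωs')
    (ψ : ℕ → P → P)
    (hψ0 : ψ 0 = id)
    (hψ_add : ∀ (i : ℕ) (x y : P), ψ i (x + y) = ψ i x + ψ i y)
    (hψ_smul : ∀ (i : ℕ) (c : K) (x : P), ψ i (c • x) = c • ψ i x)
    (hψ_even_ev : ∀ (i : ℕ), ∀ x ∈ ev, ψ i x ∈ ev)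
    (hψ_even_od : ∀ (i : ℕ), ∀ x ∈ od, ψ i x ∈ od)
    (hψ_bij : Function.Bijective (truncMap ψ k))
    (hψ_mul : ∀ f g : Fin (k + 1) → P,
      truncMap ψ k (truncMul mul k f g) =
        truncMul mul k (truncMap ψ k f) (truncMap ψ k g))
    (hψ_br : ∀ f g : Fin (k + 1) → P,
      truncMap ψ k (truncBr μ k f g) =
        truncBr μ' k (truncMap ψ k f) (truncMap ψ k g))
    (hψ_sq : ∀ f ∈ (Submodule.pi (Set.univ : Set (Fin (k + 1))) (fun _ => od)),
      truncMap ψ k (truncSq μ ωs k f) = truncSq μ' ωs' k (truncMap ψ k f)) :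
    (∀ x y : P, ψ 1 (mul x y) = mul (ψ 1 x) y + mul x (ψ 1 y)) ∧
    (∀ x y : P,
      μ 1 x y = μ' 1 x y + (br (ψ 1 x) y + br x (ψ 1 y) + ψ 1 (br x y))) ∧
    (∀ x ∈ od, ωs 1 x = ωs' 1 x + (ψ 1 (sq x) + br x (ψ 1 x))) :=
  equivalent_deformations_first_order_general ev od mul br sq hP k hk μ μ' ωs ωs' hdef hdef' ψ hψ0
    hψ_mul hψ_br hψ_sq
end

section
/- Let K be a field of characteristic 2 and (P, *, ▷) a pre-Poisson superalgebra over K. Then (P, ·, [-,-], s) is a Poisson superalgebra, where x·y := x*y + y*x, [x,y] := x▷y + y▷x for all x,y ∈ P, and s(x) := x▷x for x ∈ P₁. -/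
/-- A right Zinbiel superalgebra over a field of characteristic 2. -/
structure IsZinbiel2 (K : Type*) [Field K] {Z : Type*} [AddCommGroup Z] [Module K Z]
    (ev od : Submodule K Z) (star : Z → Z → Z) : Prop where
  compl : IsCompl ev od
  add_left : ∀ x y z : Z, star (x + y) z = star x z + star y z
  add_right : ∀ x y z : Z, star x (y + z) = star x y + star x z
  smul_left : ∀ (c : K) (x y : Z), star (c • x) y = c • star x y
  smul_right : ∀ (c : K) (x y : Z), star x (c • y) = c • star x y
  grade_ee : ∀ x ∈ ev, ∀ y ∈ ev, star x y ∈ ev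
  grade_eo : ∀ x ∈ ev, ∀ y ∈ od, star x y ∈ od
  grade_oe : ∀ x ∈ od, ∀ y ∈ ev, star x y ∈ od
  grade_oo : ∀ x ∈ od, ∀ y ∈ od, star x y ∈ ev
  zinbiel : ∀ x y z : Z, star x (star y z) = star (star y x) z + star (star x y) z
/-- A left-symmetric superalgebra in characteristic 2. -/
structure IsLeftSym2 (K : Type*) [Field K] {V : Type*} [AddCommGroup V] [Module K V]
    (ev od : Submodule K V) (tri : V → V → V) : Prop where
  compl : IsCompl ev od
  add_left : ∀ x y z : V, tri (x + y) z = tri x z + tri y z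
  add_right : ∀ x y z : V, tri x (y + z) = tri x y + tri x z
  smul_left : ∀ (c : K) (x y : V), tri (c • x) y = c • tri x y
  smul_right : ∀ (c : K) (x y : V), tri x (c • y) = c • tri x y
  grade_ee : ∀ x ∈ ev, ∀ y ∈ ev, tri x y ∈ ev
  grade_eo : ∀ x ∈ ev, ∀ y ∈ od, tri x y ∈ od
  grade_oe : ∀ x ∈ od, ∀ y ∈ ev, tri x y ∈ od
  grade_oo : ∀ x ∈ od, ∀ y ∈ od, tri x y ∈ ev
  lsym : ∀ x y z : V,
    tri x (tri y z) + tri (tri x y) z = tri y (tri x z) + tri (tri y x) z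
  lsym_od : ∀ x ∈ od, ∀ y : V, tri x (tri x y) = tri (tri x x) y
/-- A pre-Poisson superalgebra in characteristic 2: a right Zinbiel product `star` and
a left-symmetric product `tri` subject to two compatibility conditions. -/
structure IsPrePoisson2 (K : Type*) [Field K] {P : Type*} [AddCommGroup P] [Module K P]
    (ev od : Submodule K P) (star tri : P → P → P) : Prop where
  zinbiel : IsZinbiel2 K ev od star
  leftSym : IsLeftSym2 K ev od tri
  compat1 : ∀ x y z : P,
    star (tri x y + tri y x) z = tri x (star y z) + star y (tri x z)
  compat2 : ∀ x y z : P,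
    tri (star x y + star y x) z = star x (tri y z) + star y (tri x z)


theorem add_self_eq_zero_of_charTwo (K : Type*) {M : Type*} [Ring K] [CharP K 2] [AddCommGroup M]
    [Module K M] (a : M) : a + a = 0 := by
  rw [← two_smul K, CharTwo.two_eq_zero, zero_smul]

/-- Rewriting an identity into this form turns rearranging an axiom in characteristic 2 into a
permutation of summands, which `abel` closes. -/
theorem eq_iff_add_eq_zero_of_charTwo (K : Type*) {M : Type*} [Ring K] [CharP K 2]
    [AddCommGroup M] [Module K M] {a b : M} : a = b ↔ a + b = 0 := by
  rw [add_eq_zero_iff_eq_neg, ← neg_one_smul K b, CharTwo.neg_eq, one_smul]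

section

variable {K P : Type*} [Field K] [AddCommGroup P] [Module K P] {ev od : Submodule K P}

namespace IsZinbiel2

variable {star : P → P → P}

theorem star_zero_left (hz : IsZinbiel2 K ev od star) (y : P) : star 0 y = 0 := by
  simpa using hz.smul_left 0 0 y

theorem star_zero_right (hz : IsZinbiel2 K ev od star) (x : P) : star x 0 = 0 := by
  simpa using hz.smul_right 0 x 0

theorem star_symm_star (hz : IsZinbiel2 K ev od star) (x y z : P) :
    star (star x y + star y x) z = star x (star y z) := by
  rw [hz.add_left, hz.zinbiel, add_comm]

theorem star_left_comm (hz : IsZinbiel2 K ev od star) (x y z : P) :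
    star x (star y z) = star y (star x z) := by
  rw [hz.zinbiel, hz.zinbiel, add_comm]

theorem star_star_self (hz : IsZinbiel2 K ev od star) [CharP K 2] (x y : P) :
    star x (star x y) = 0 := by
  rw [hz.zinbiel]
  exact add_self_eq_zero_of_charTwo K _

theorem isSuperComm2 (hz : IsZinbiel2 K ev od star) [CharP K 2] :
    IsSuperComm2 K ev od (fun x y => star x y + star y x) where
  compl := hz.compl
  add_left a b c := by rw [hz.add_left, hz.add_right]; abel
  smul_left k a b := by rw [hz.smul_left, hz.smul_right, smul_add]
  comm a b := add_comm _ _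
  assoc a b c := by
    rw [hz.star_symm_star, hz.add_right, hz.add_right, hz.star_symm_star,
      hz.star_left_comm c a b, hz.star_left_comm c b a]
    abel
  alt_od a _ := add_self_eq_zero_of_charTwo K _
  grade_ee a ha b hb := add_mem (hz.grade_ee a ha b hb) (hz.grade_ee b hb a ha)
  grade_eo a ha b hb := add_mem (hz.grade_eo a ha b hb) (hz.grade_oe b hb a ha)
  grade_oo a ha b hb := add_mem (hz.grade_oo a ha b hb) (hz.grade_oo b hb a ha)

end IsZinbiel2

namespace IsLeftSym2

variable [CharP K 2] {tri : P → P → P}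

theorem tri_symm_tri (hl : IsLeftSym2 K ev od tri) (x y z : P) :
    tri (tri x y + tri y x) z = tri x (tri y z) + tri y (tri x z) := by
  have h := hl.lsym x y z
  rw [eq_iff_add_eq_zero_of_charTwo K] at h ⊢
  rw [hl.add_left, ← h]
  abel

theorem tri_tri (hl : IsLeftSym2 K ev od tri) (x y z : P) :
    tri x (tri y z) = tri (tri x y + tri y x) z + tri y (tri x z) := by
  have h := hl.tri_symm_tri x y z
  rw [eq_iff_add_eq_zero_of_charTwo K] at h ⊢
  rw [← h]
  abel

theorem isLieSuper2 (hl : IsLeftSym2 K ev od tri) :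
    IsLieSuper2 K ev od (fun x y => tri x y + tri y x) (fun x => tri x x) where
  compl := hl.compl
  add_left x y z := by rw [hl.add_left, hl.add_right]; abel
  smul_left c x y := by rw [hl.smul_left, hl.smul_right, smul_add]
  symm x y := add_comm _ _
  alt_ev x _ := add_self_eq_zero_of_charTwo K _
  grade_ee x hx y hy := add_mem (hl.grade_ee x hx y hy) (hl.grade_ee y hy x hx)
  grade_eo x hx y hy := add_mem (hl.grade_eo x hx y hy) (hl.grade_oe y hy x hx)
  grade_oo x hx y hy := add_mem (hl.grade_oo x hx y hy) (hl.grade_oo y hy x hx)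
  jacobi_ev x _ y _ z := by
    rw [hl.tri_symm_tri, hl.add_right z, hl.tri_tri z x y, hl.tri_tri z y x]
    simp only [hl.add_left, hl.add_right]
    abel
  sq_mem x hx := hl.grade_oo x hx x hx
  sq_smul c x _ := by rw [hl.smul_left, hl.smul_right, smul_smul]
  sq_add x _ y _ := by rw [hl.add_left, hl.add_right, hl.add_right]; abel
  sq_jacobi x hx z := by
    rw [hl.add_right x, ← hl.lsym_od x hx z, hl.tri_tri z x x]
    simp only [hl.add_left]
    abel

end IsLeftSym2

namespace IsPrePoisson2

variable [CharP K 2] {star tri : P → P → P}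

theorem tri_star (h : IsPrePoisson2 K ev od star tri) (x y z : P) :
    tri x (star y z) = star (tri x y + tri y x) z + star y (tri x z) := by
  have h1 := h.compat1 x y z
  rw [eq_iff_add_eq_zero_of_charTwo K] at h1 ⊢
  rw [← h1]
  abel

theorem tri_star_self (h : IsPrePoisson2 K ev od star tri) (x y : P) :
    tri x (star x y) = star x (tri x y) := by
  rw [h.tri_star, add_self_eq_zero_of_charTwo K, h.zinbiel.star_zero_left, zero_add]

theorem leibniz (h : IsPrePoisson2 K ev od star tri) (x y z : P) :
    tri (star x y + star y x) z + tri z (star x y + star y x)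
      = star x (tri y z + tri z y) + star (tri y z + tri z y) x
        + (star (tri x z + tri z x) y + star y (tri x z + tri z x)) := by
  rw [h.compat2, h.leftSym.add_right, h.tri_star z x y, h.tri_star z y x]
  simp only [h.zinbiel.add_left, h.zinbiel.add_right]
  abel

theorem sq_mul (h : IsPrePoisson2 K ev od star tri) (x y : P) :
    tri (star x y + star y x) (star x y + star y x)
      = star (star x x + star x x) (tri y y) + star (tri y y) (star x x + star x x)
        + (star (star x y + star y x) (tri x y + tri y x)
          + star (tri x y + tri y x) (star x y + star y x)) := by
  have hz := h.zinbiel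
  have hxx : star x x + star x x = 0 := add_self_eq_zero_of_charTwo K _
  rw [hxx, hz.star_zero_left, hz.star_zero_right, zero_add, hz.star_symm_star, h.compat2,
    h.leftSym.add_right, h.leftSym.add_right, h.tri_star y x y, h.tri_star_self y x,
    h.tri_star_self x y, h.tri_star x y x, add_comm (tri y x) (tri x y)]
  simp only [hz.add_right, hz.star_star_self, add_zero]
  rw [hz.star_left_comm x (tri x y + tri y x) y, hz.star_left_comm y (tri x y + tri y x) x,
    hz.star_left_comm y x (tri x y)]
  abel

end IsPrePoisson2

end

/-- **Statement 18.** A pre-Poisson superalgebra `(P, *, ▷)` in characteristic 2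
gives rise to a Poisson superalgebra with product `x·y = x*y + y*x`, bracket
`[x,y] = x▷y + y▷x` and squaring `s(x) = x▷x`. -/
theorem prePoisson_gives_poisson
    {K P : Type*} [Field K] [CharP K 2] [AddCommGroup P] [Module K P]
    (ev od : Submodule K P) (star tri : P → P → P)
    (hPP : IsPrePoisson2 K ev od star tri) :
    IsPoisson2 K ev od
      (fun x y => star x y + star y x)
      (fun x y => tri x y + tri y x)
      (fun x => tri x x) :=
  ⟨hPP.zinbiel.isSuperComm2, hPP.leftSym.isLieSuper2, hPP.leibniz,
    fun x _ y _ => hPP.sq_mul x y⟩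
end

section
/- Let (P, ·, {-,-}, s) be a Poisson superalgebra over a field K of characteristic 2 and let R : P → P be an even linear map which is simultaneously a Rota-Baxter operator for the associative product, i.e. R(x)·R(y) = R(R(x)·y + x·R(y)) for all x,y ∈ P, and for the Lie structure, i.e. {R(x), R(y)} = R({R(x),y} + {x,R(y)}) for all x,y ∈ P and s(R(x)) = R({R(x), x}) for all x ∈ P₁. Define x*y := R(x)·y and x▷y := {R(x), y}. Then (P, *) is a right Zinbiel superalgebra, (P, ▷) is a left-symmetric superalgebra in characteristic 2, and (P, *, ▷) is a pre-Poisson superalgebra. -/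
section CharTwo

variable {M : Type*} [AddCommGroup M]

theorem charTwo_add_self_eq_zero (K : Type*) [Semiring K] [CharP K 2] [Module K M] (a : M) :
    a + a = 0 := by
  rw [← two_smul K a, CharTwo.two_eq_zero, zero_smul]

theorem charTwo_eq_iff_add_eq_zero (K : Type*) [Semiring K] [CharP K 2] [Module K M]
    {a b : M} : a = b ↔ a + b = 0 := by
  rw [add_eq_zero_iff_eq_neg, neg_eq_of_add_eq_zero_left (charTwo_add_self_eq_zero K b)]

end CharTwo

def jacobiator {L : Type*} [Add L] (br : L → L → L) (x y z : L) : L :=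
  br (br x y) z + br x (br y z) + br y (br x z)

theorem jacobiator_eq_zero_iff (K : Type*) {L : Type*} [Semiring K] [CharP K 2]
    [AddCommGroup L] [Module K L] (br : L → L → L) (x y z : L) :
    jacobiator br x y z = 0 ↔ br (br x y) z = br x (br y z) + br y (br x z) := by
  rw [jacobiator, add_assoc, ← charTwo_eq_iff_add_eq_zero K]

namespace IsLieSuper2

variable {K L : Type*} [Field K] [AddCommGroup L] [Module K L] {ev od : Submodule K L}
  {br : L → L → L} {sq : L → L}

theorem br_add_right (hL : IsLieSuper2 K ev od br sq) (x y z : L) :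
    br x (y + z) = br x y + br x z := by
  rw [hL.symm x, hL.add_left, hL.symm y, hL.symm z]

theorem br_smul_right (hL : IsLieSuper2 K ev od br sq) (c : K) (x y : L) :
    br x (c • y) = c • br x y := by
  rw [hL.symm x, hL.smul_left, hL.symm y]

theorem grade_oe (hL : IsLieSuper2 K ev od br sq) : ∀ x ∈ od, ∀ y ∈ ev, br x y ∈ od :=
  fun x hx y hy => hL.symm y x ▸ hL.grade_eo y hy x hx

theorem jacobiator_add_left (hL : IsLieSuper2 K ev od br sq) (x₁ x₂ y z : L) :
    jacobiator br (x₁ + x₂) y z = jacobiator br x₁ y z + jacobiator br x₂ y z := by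
  simp only [jacobiator, hL.add_left, hL.br_add_right]
  abel

theorem jacobiator_add_mid (hL : IsLieSuper2 K ev od br sq) (x y₁ y₂ z : L) :
    jacobiator br x (y₁ + y₂) z = jacobiator br x y₁ z + jacobiator br x y₂ z := by
  simp only [jacobiator, hL.add_left, hL.br_add_right]
  abel

theorem jacobiator_add_right (hL : IsLieSuper2 K ev od br sq) (x y z₁ z₂ : L) :
    jacobiator br x y (z₁ + z₂) = jacobiator br x y z₁ + jacobiator br x y z₂ := by
  simp only [jacobiator, hL.br_add_right]
  abel

theorem jacobiator_swap12 (hL : IsLieSuper2 K ev od br sq) (x y z : L) :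
    jacobiator br y x z = jacobiator br x y z := by
  rw [jacobiator, jacobiator, hL.symm y x]
  abel

theorem jacobiator_swap23 (hL : IsLieSuper2 K ev od br sq) (x y z : L) :
    jacobiator br x z y = jacobiator br x y z := by
  rw [jacobiator, jacobiator, hL.symm (br x z) y, hL.symm z y, hL.symm z (br x y)]
  abel

theorem jacobi_of_mem_od (hL : IsLieSuper2 K ev od br sq) {x y : L} (hx : x ∈ od)
    (hy : y ∈ od) (z : L) : br (br x y) z = br x (br y z) + br y (br x z) := by
  have expand : br (sq (x + y)) z = br (sq x) z + br (sq y) z + br (br x y) z := by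
    rw [hL.sq_add x hx y hy, hL.add_left, hL.add_left]
  have polarize :
      br (sq (x + y)) z = br (sq x) z + br (sq y) z + (br x (br y z) + br y (br x z)) := by
    rw [hL.sq_jacobi (x + y) (add_mem hx hy), hL.add_left x y z, hL.add_left,
      hL.br_add_right, hL.br_add_right, ← hL.sq_jacobi x hx, ← hL.sq_jacobi y hy]
    abel
  exact add_left_cancel (expand.symm.trans polarize)

variable [CharP K 2]

theorem jacobiator_eq_zero_of_mem_ev_of_mem_od (hL : IsLieSuper2 K ev od br sq) {x y : L}
    (hx : x ∈ ev) (hy : y ∈ od) (z : L) : jacobiator br x y z = 0 := by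
  obtain ⟨ze, zo, hze, hzo, rfl⟩ :=
    Submodule.codisjoint_iff_exists_add_eq.mp hL.compl.codisjoint z
  have hxze : jacobiator br x ze y = 0 :=
    (jacobiator_eq_zero_iff K br _ _ _).mpr (hL.jacobi_ev x hx ze hze y)
  have hyzo : jacobiator br y zo x = 0 :=
    (jacobiator_eq_zero_iff K br _ _ _).mpr (hL.jacobi_of_mem_od hy hzo x)
  rw [hL.jacobiator_add_right, ← hL.jacobiator_swap23, hxze, ← hL.jacobiator_swap12,
    ← hL.jacobiator_swap23, hyzo, add_zero]

theorem jacobiator_eq_zero (hL : IsLieSuper2 K ev od br sq) (x y z : L) :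
    jacobiator br x y z = 0 := by
  obtain ⟨xe, xo, hxe, hxo, rfl⟩ :=
    Submodule.codisjoint_iff_exists_add_eq.mp hL.compl.codisjoint x
  obtain ⟨ye, yo, hye, hyo, rfl⟩ :=
    Submodule.codisjoint_iff_exists_add_eq.mp hL.compl.codisjoint y
  have hee : jacobiator br xe ye z = 0 :=
    (jacobiator_eq_zero_iff K br _ _ _).mpr (hL.jacobi_ev xe hxe ye hye z)
  have hoo : jacobiator br xo yo z = 0 :=
    (jacobiator_eq_zero_iff K br _ _ _).mpr (hL.jacobi_of_mem_od hxo hyo z)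
  rw [hL.jacobiator_add_left, hL.jacobiator_add_mid, hL.jacobiator_add_mid, hee, hoo,
    hL.jacobiator_eq_zero_of_mem_ev_of_mem_od hxe hyo, hL.jacobiator_swap12 ye xo,
    hL.jacobiator_eq_zero_of_mem_ev_of_mem_od hye hxo]
  simp

theorem rotaBaxter_lsym (hL : IsLieSuper2 K ev od br sq) {R : L → L}
    (hR_add : ∀ x y : L, R (x + y) = R x + R y)
    (hRB_br : ∀ x y : L, br (R x) (R y) = R (br (R x) y + br x (R y))) (x y z : L) :
    br (R x) (br (R y) z) + br (R (br (R x) y)) z =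
      br (R y) (br (R x) z) + br (R (br (R y) x)) z := by
  have hRB : br (R (br (R x) y)) z + br (R (br (R y) x)) z = br (br (R x) (R y)) z := by
    rw [← hL.add_left, ← hR_add, hL.symm (R y) x, ← hRB_br]
  rw [charTwo_eq_iff_add_eq_zero K, ← hL.jacobiator_eq_zero (R x) (R y) z, jacobiator, ← hRB]
  abel

theorem isLeftSym2_of_rotaBaxter (hL : IsLieSuper2 K ev od br sq) {R : L → L}
    (hR_add : ∀ x y : L, R (x + y) = R x + R y)
    (hR_smul : ∀ (c : K) (x : L), R (c • x) = c • R x)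
    (hR_even_ev : ∀ x ∈ ev, R x ∈ ev) (hR_even_od : ∀ x ∈ od, R x ∈ od)
    (hRB_br : ∀ x y : L, br (R x) (R y) = R (br (R x) y + br x (R y)))
    (hRB_sq : ∀ x ∈ od, sq (R x) = R (br (R x) x)) :
    IsLeftSym2 K ev od (fun x y => br (R x) y) where
  compl := hL.compl
  add_left x y z := by simp only [hR_add, hL.add_left]
  add_right x y z := hL.br_add_right (R x) y z
  smul_left c x y := by simp only [hR_smul, hL.smul_left]
  smul_right c x y := hL.br_smul_right c (R x) y
  grade_ee x hx y hy := hL.grade_ee _ (hR_even_ev x hx) y hy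
  grade_eo x hx y hy := hL.grade_eo _ (hR_even_ev x hx) y hy
  grade_oe x hx y hy := hL.grade_oe _ (hR_even_od x hx) y hy
  grade_oo x hx y hy := hL.grade_oo _ (hR_even_od x hx) y hy
  lsym := hL.rotaBaxter_lsym hR_add hRB_br
  lsym_od x hx y := by
    simp only [← hRB_sq x hx, hL.sq_jacobi (R x) (hR_even_od x hx) y]

end IsLieSuper2

namespace IsSuperComm2

variable {K A : Type*} [Field K] [AddCommGroup A] [Module K A] {ev od : Submodule K A}
  {mul : A → A → A}

theorem mul_add_right (hC : IsSuperComm2 K ev od mul) (a b c : A) :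
    mul a (b + c) = mul a b + mul a c := by
  rw [hC.comm a, hC.add_left, hC.comm b, hC.comm c]

theorem mul_smul_right (hC : IsSuperComm2 K ev od mul) (k : K) (a b : A) :
    mul a (k • b) = k • mul a b := by
  rw [hC.comm a, hC.smul_left, hC.comm b]

theorem grade_oe (hC : IsSuperComm2 K ev od mul) : ∀ a ∈ od, ∀ b ∈ ev, mul a b ∈ od :=
  fun a ha b hb => hC.comm b a ▸ hC.grade_eo b hb a ha

theorem rotaBaxter_zinbiel (hC : IsSuperComm2 K ev od mul) {R : A → A}
    (hR_add : ∀ x y : A, R (x + y) = R x + R y)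
    (hRB_mul : ∀ x y : A, mul (R x) (R y) = R (mul (R x) y + mul x (R y))) (x y z : A) :
    mul (R x) (mul (R y) z) = mul (R (mul (R y) x)) z + mul (R (mul (R x) y)) z := by
  rw [← hC.add_left, ← hR_add, hC.comm (R x) y, ← hRB_mul y x, hC.comm (R y) (R x), hC.assoc]

theorem isZinbiel2_of_rotaBaxter (hC : IsSuperComm2 K ev od mul) {R : A → A}
    (hR_add : ∀ x y : A, R (x + y) = R x + R y)
    (hR_smul : ∀ (c : K) (x : A), R (c • x) = c • R x)
    (hR_even_ev : ∀ x ∈ ev, R x ∈ ev) (hR_even_od : ∀ x ∈ od, R x ∈ od)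
    (hRB_mul : ∀ x y : A, mul (R x) (R y) = R (mul (R x) y + mul x (R y))) :
    IsZinbiel2 K ev od (fun x y => mul (R x) y) where
  compl := hC.compl
  add_left x y z := by simp only [hR_add, hC.add_left]
  add_right x y z := hC.mul_add_right (R x) y z
  smul_left c x y := by simp only [hR_smul, hC.smul_left]
  smul_right c x y := hC.mul_smul_right c (R x) y
  grade_ee x hx y hy := hC.grade_ee _ (hR_even_ev x hx) y hy
  grade_eo x hx y hy := hC.grade_eo _ (hR_even_ev x hx) y hy
  grade_oe x hx y hy := hC.grade_oe _ (hR_even_od x hx) y hy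
  grade_oo x hx y hy := hC.grade_oo _ (hR_even_od x hx) y hy
  zinbiel := hC.rotaBaxter_zinbiel hR_add hRB_mul

end IsSuperComm2

namespace IsPoisson2

variable {K P : Type*} [Field K] [AddCommGroup P] [Module K P] {ev od : Submodule K P}
  {mul br : P → P → P} {sq : P → P}

theorem rotaBaxter_compat1 [CharP K 2] (hP : IsPoisson2 K ev od mul br sq) {R : P → P}
    (hRB_br : ∀ x y : P, br (R x) (R y) = R (br (R x) y + br x (R y))) (x y z : P) :
    mul (R (br (R x) y + br (R y) x)) z = br (R x) (mul (R y) z) + mul (R y) (br (R x) z) := by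
  have hL := hP.lieAlg
  have leibniz : br (R x) (mul (R y) z) = mul (R y) (br (R x) z) + mul (br (R x) (R y)) z := by
    rw [hL.symm (R x), hP.leibniz, hL.symm z, hL.symm (R y)]
  rw [leibniz, add_right_comm, charTwo_add_self_eq_zero K, zero_add, hL.symm (R y) x, ← hRB_br]

theorem rotaBaxter_compat2 (hP : IsPoisson2 K ev od mul br sq) {R : P → P}
    (hRB_mul : ∀ x y : P, mul (R x) (R y) = R (mul (R x) y + mul x (R y))) (x y z : P) :
    br (R (mul (R x) y + mul (R y) x)) z = mul (R x) (br (R y) z) + mul (R y) (br (R x) z) := by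
  rw [hP.commAlg.comm (R y) x, ← hRB_mul, hP.leibniz, hP.commAlg.comm (br (R x) z)]

theorem isPrePoisson2_of_rotaBaxter [CharP K 2] (hP : IsPoisson2 K ev od mul br sq)
    {R : P → P} (hR_add : ∀ x y : P, R (x + y) = R x + R y)
    (hR_smul : ∀ (c : K) (x : P), R (c • x) = c • R x)
    (hR_even_ev : ∀ x ∈ ev, R x ∈ ev) (hR_even_od : ∀ x ∈ od, R x ∈ od)
    (hRB_mul : ∀ x y : P, mul (R x) (R y) = R (mul (R x) y + mul x (R y)))
    (hRB_br : ∀ x y : P, br (R x) (R y) = R (br (R x) y + br x (R y)))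
    (hRB_sq : ∀ x ∈ od, sq (R x) = R (br (R x) x)) :
    IsPrePoisson2 K ev od (fun x y => mul (R x) y) (fun x y => br (R x) y) where
  zinbiel := hP.commAlg.isZinbiel2_of_rotaBaxter hR_add hR_smul hR_even_ev hR_even_od hRB_mul
  leftSym :=
    hP.lieAlg.isLeftSym2_of_rotaBaxter hR_add hR_smul hR_even_ev hR_even_od hRB_br hRB_sq
  compat1 := hP.rotaBaxter_compat1 hRB_br
  compat2 := hP.rotaBaxter_compat2 hRB_mul

end IsPoisson2

/-- **Statement 19.** Let `(P, mul, br, sq)` be a Poisson superalgebra in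
characteristic 2 and let `R` be an even linear map which is simultaneously a
Rota-Baxter operator for the associative product and for the Lie structure.  Then
`x*y = R(x)·y` is a right Zinbiel product, `x▷y = {R(x), y}` is a left-symmetric
product, and together they form a pre-Poisson superalgebra. -/
theorem rotaBaxter_gives_prePoisson
    {K P : Type*} [Field K] [CharP K 2] [AddCommGroup P] [Module K P]
    (ev od : Submodule K P) (mul br : P → P → P) (sq : P → P)
    (hP : IsPoisson2 K ev od mul br sq)
    (R : P → P)
    (hR_add : ∀ x y : P, R (x + y) = R x + R y)
    (hR_smul : ∀ (c : K) (x : P), R (c • x) = c • R x)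
    (hR_even_ev : ∀ x ∈ ev, R x ∈ ev)
    (hR_even_od : ∀ x ∈ od, R x ∈ od)
    (hRB_mul : ∀ x y : P, mul (R x) (R y) = R (mul (R x) y + mul x (R y)))
    (hRB_br : ∀ x y : P, br (R x) (R y) = R (br (R x) y + br x (R y)))
    (hRB_sq : ∀ x ∈ od, sq (R x) = R (br (R x) x)) :
    IsZinbiel2 K ev od (fun x y => mul (R x) y) ∧
    IsLeftSym2 K ev od (fun x y => br (R x) y) ∧
    IsPrePoisson2 K ev od (fun x y => mul (R x) y) (fun x y => br (R x) y) := by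
  have h := hP.isPrePoisson2_of_rotaBaxter hR_add hR_smul hR_even_ev hR_even_od hRB_mul hRB_br
    hRB_sq
  exact ⟨h.zinbiel, h.leftSym, h⟩
end
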